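/- arXiv:0906.2029 — 3 statements merged into one kernel-verified Lean document; each statement's English description precedes it below -/
import Mathlib

section
/- If u1, u3 : R → R are smooth, then the shear flow u(x,t) = (u1(x2), 0, u3(x1 - t u1(x2))) is a classical solution of the incompressible Euler equations with zero pressure: ∂_t u + (u·∇)u = 0 and div u = 0. -/
/-- For smooth `u1, u3 : ℝ → ℝ`, the shear flow
`u(x,t) = (u1 x2, 0, u3 (x1 - t u1 x2))` is a classical solution of the
incompressible Euler equations with zero pressure:
`∂_t u + (u·∇)u = 0` componentwise and `div u = 0`. -/
theorem shear_flow_classical_euler (u1 u3 : ℝ → ℝ)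
    (h1 : ContDiff ℝ (⊤ : ℕ∞) u1) (h3 : ContDiff ℝ (⊤ : ℕ∞) u3) :
    ∀ t x1 x2 x3 : ℝ,
      -- first component of ∂_t u + (u·∇)u
      (deriv (fun τ : ℝ => u1 x2) t
        + u1 x2 * deriv (fun s : ℝ => u1 x2) x1
        + (0 : ℝ) * deriv (fun s : ℝ => u1 s) x2
        + u3 (x1 - t * u1 x2) * deriv (fun s : ℝ => u1 x2) x3 = 0) ∧
      -- second component is identically zero
      ((0 : ℝ) = 0) ∧
      -- third component of ∂_t u + (u·∇)u
      (deriv (fun τ : ℝ => u3 (x1 - τ * u1 x2)) t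
        + u1 x2 * deriv (fun s : ℝ => u3 (s - t * u1 x2)) x1
        + (0 : ℝ) * deriv (fun s : ℝ => u3 (x1 - t * u1 s)) x2
        + u3 (x1 - t * u1 x2) * deriv (fun s : ℝ => u3 (x1 - t * u1 x2)) x3 = 0) ∧
      -- divergence free
      (deriv (fun s : ℝ => u1 x2) x1 + deriv (fun s : ℝ => (0 : ℝ)) x2 +
        deriv (fun s : ℝ => u3 (x1 - t * u1 x2)) x3 = 0) := by
  intro t x1 x2 x3
  set a := u1 x2 with ha
  set d := deriv u3 (x1 - t * a) with hd
  have h3' : HasDerivAt u3 d (x1 - t * a) :=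
    (h3.differentiable (by simp) (x1 - t * a)).hasDerivAt
  -- time derivative of third component
  have hT : HasDerivAt (fun τ : ℝ => u3 (x1 - τ * a)) (d * (-a)) t := by
    have hin : HasDerivAt (fun τ : ℝ => x1 - τ * a) (-a) t := by
      simpa using ((hasDerivAt_id t).mul_const a).const_sub x1
    exact h3'.comp t hin
  -- x1 derivative of third component
  have hX : HasDerivAt (fun s : ℝ => u3 (s - t * a)) (d * 1) x1 := by
    have hin : HasDerivAt (fun s : ℝ => s - t * a) 1 x1 := by
      simpa using (hasDerivAt_id x1).sub_const (t * a)
    exact h3'.comp x1 hin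
  refine ⟨by simp, rfl, ?_, by simp⟩
  rw [hT.deriv, hX.deriv, deriv_const]
  ring
end

section
/- The 4×4 matrix A(k,θ) arising as the linearization of the 3d Kelvin–Helmholtz problem, with entries A = [[0, (i/2) sinθ, -(i/2) cosθ, 0], [-(i/2)|k|^2 w^2 sinθ, 0, 0, (1/2) c sinθ], [(i/2)|k|^2 w^2 cosθ, 0, 0, -(1/2) c cosθ], [0, -(1/2) c sinθ, (1/2) c cosθ, 0]], where w = |ω⁰|, c = k·ω⁰, has eigenvalues {0, 0, -(1/2)|k ∧ ω⁰|, (1/2)|k ∧ ω⁰|}. -/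
open Polynomial

private theorem det_fin_four' {R : Type*} [CommRing R] (M : Matrix (Fin 4) (Fin 4) R) :
    M.det =
      M 0 0 * (M 1 1 * (M 2 2 * M 3 3 - M 2 3 * M 3 2) - M 1 2 * (M 2 1 * M 3 3 - M 2 3 * M 3 1) +
        M 1 3 * (M 2 1 * M 3 2 - M 2 2 * M 3 1)) -
      M 0 1 * (M 1 0 * (M 2 2 * M 3 3 - M 2 3 * M 3 2) - M 1 2 * (M 2 0 * M 3 3 - M 2 3 * M 3 0) +
        M 1 3 * (M 2 0 * M 3 2 - M 2 2 * M 3 0)) +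
      M 0 2 * (M 1 0 * (M 2 1 * M 3 3 - M 2 3 * M 3 1) - M 1 1 * (M 2 0 * M 3 3 - M 2 3 * M 3 0) +
        M 1 3 * (M 2 0 * M 3 1 - M 2 1 * M 3 0)) -
      M 0 3 * (M 1 0 * (M 2 1 * M 3 2 - M 2 2 * M 3 1) - M 1 1 * (M 2 0 * M 3 2 - M 2 2 * M 3 0) +
        M 1 2 * (M 2 0 * M 3 1 - M 2 1 * M 3 0)) := by
  rw [Matrix.det_succ_row_zero]
  simp [Fin.sum_univ_succ, Matrix.det_fin_three, Matrix.submatrix, Fin.succ_succAbove_one,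
    show (Fin.succ 2 : Fin 4) = 3 from rfl, show Fin.succAbove 2 2 = (3:Fin 4) from rfl,
    show Fin.succAbove 1 2 = (3:Fin 4) from rfl, show Fin.castSucc 2 = (2:Fin 4) from rfl,
    show Fin.succAbove 2 (2:Fin 2) = (3:Fin 3) from rfl, show Fin.succAbove 3 2 = (2:Fin 4) from rfl]
  ring

/-- The linearization matrix of the 3d Kelvin–Helmholtz problem. With
`k = |k|(cos θ, sin θ)`, `w² = |ω⁰|²`, `c = k·ω⁰`, the 4×4 matrix `A` has
characteristic polynomial `λ²(λ² - |k ∧ ω⁰|²/4)`, i.e. eigenvalues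
`{0, 0, -|k ∧ ω⁰|/2, |k ∧ ω⁰|/2}`. -/
theorem kelvin_helmholtz_linearization_eigenvalues
    (kn θ ω1 ω2 : ℝ)
    (A : Matrix (Fin 4) (Fin 4) ℂ)
    (hA : A = !![0, Complex.I / 2 * (Real.sin θ : ℂ), -(Complex.I / 2) * (Real.cos θ : ℂ), 0;
      -(Complex.I / 2) * ((kn ^ 2 * (ω1 ^ 2 + ω2 ^ 2) : ℝ) : ℂ) * (Real.sin θ : ℂ), 0, 0,
        (1 / 2 : ℂ) * ((kn * Real.cos θ * ω1 + kn * Real.sin θ * ω2 : ℝ) : ℂ) * (Real.sin θ : ℂ);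
      Complex.I / 2 * ((kn ^ 2 * (ω1 ^ 2 + ω2 ^ 2) : ℝ) : ℂ) * (Real.cos θ : ℂ), 0, 0,
        -(1 / 2 : ℂ) * ((kn * Real.cos θ * ω1 + kn * Real.sin θ * ω2 : ℝ) : ℂ) * (Real.cos θ : ℂ);
      0, -(1 / 2 : ℂ) * ((kn * Real.cos θ * ω1 + kn * Real.sin θ * ω2 : ℝ) : ℂ) * (Real.sin θ : ℂ),
        (1 / 2 : ℂ) * ((kn * Real.cos θ * ω1 + kn * Real.sin θ * ω2 : ℝ) : ℂ) * (Real.cos θ : ℂ), 0]) :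
    A.charpoly =
      X ^ 2 * (X ^ 2 - C (((kn * Real.cos θ * ω2 - kn * Real.sin θ * ω1) ^ 2 / 4 : ℝ) : ℂ)) ∧
    ∀ lam : ℂ, A.charpoly.IsRoot lam ↔
      lam = 0 ∨ lam = ((|kn * Real.cos θ * ω2 - kn * Real.sin θ * ω1| / 2 : ℝ) : ℂ) ∨
        lam = -((|kn * Real.cos θ * ω2 - kn * Real.sin θ * ω1| / 2 : ℝ) : ℂ) := by
  have hcp : A.charpoly =
      X ^ 2 * (X ^ 2 - C (((kn * Real.cos θ * ω2 - kn * Real.sin θ * ω1) ^ 2 / 4 : ℝ) : ℂ)) := by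
    subst hA
    rw [Matrix.charpoly, det_fin_four']
    simp only [Matrix.charmatrix_apply, Matrix.diagonal_apply, Matrix.map_apply, Matrix.cons_val',
      Matrix.cons_val_zero, Matrix.cons_val_one, Matrix.head_cons, Matrix.empty_val',
      Matrix.cons_val_fin_one, Matrix.head_fin_const, Matrix.cons_val_two, Matrix.tail_cons,
      Matrix.cons_val_three, Matrix.of_apply, Matrix.diagonal_apply]
    simp (config := { decide := true }) only []
    norm_num [Matrix.diagonal_apply, Fin.ext_iff]
    apply Polynomial.funext
    intro x
    simp only [eval_mul, eval_add, eval_sub, eval_neg, eval_pow, eval_X, eval_C, eval_one]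
    have hs : Complex.sin (θ : ℂ) ^ 2 + Complex.cos (θ : ℂ) ^ 2 = 1 := Complex.sin_sq_add_cos_sq _
    have hI : Complex.I ^ 2 = -1 := Complex.I_sq
    set s := Complex.sin (θ : ℂ)
    set c := Complex.cos (θ : ℂ)
    set K := (kn : ℂ); set o1 := (ω1 : ℂ); set o2 := (ω2 : ℂ); set i := Complex.I
    linear_combination ((1/4 : ℂ)*x^2*c^2*K^2*o2^2 + (1/4 : ℂ)*x^2*c^2*K^2*o1^2
        + (1/4 : ℂ)*x^2*s^2*K^2*o2^2 + (1/4 : ℂ)*x^2*s^2*K^2*o1^2) * hI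
      + ((1/4 : ℂ)*x^2*c^2*K^2*o1^2 + (1/2 : ℂ)*x^2*s*c*K^2*o1*o2
        + (1/4 : ℂ)*x^2*s^2*K^2*o2^2) * hs
  refine ⟨hcp, fun lam => ?_⟩
  set d := kn * Real.cos θ * ω2 - kn * Real.sin θ * ω1 with hd
  have hm : ((|d| / 2 : ℝ) : ℂ) ^ 2 = ((d ^ 2 / 4 : ℝ) : ℂ) := by
    norm_cast
    rw [div_pow, sq_abs]
    norm_num
  set m : ℂ := ((|d| / 2 : ℝ) : ℂ)
  rw [hcp]
  simp only [IsRoot.def, eval_mul, eval_sub, eval_pow, eval_X, eval_C, ← hm]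
  constructor
  · intro h
    rcases mul_eq_zero.1 h with h | h
    · exact Or.inl (pow_eq_zero_iff two_ne_zero |>.1 h)
    · rcases mul_eq_zero.1 (show (lam - m) * (lam + m) = 0 by linear_combination h) with h | h
      · exact Or.inr (Or.inl (sub_eq_zero.1 h))
      · exact Or.inr (Or.inr (eq_neg_of_add_eq_zero_left h))
  · rintro (rfl | rfl | rfl) <;> ring
end

section
/- Let u1, u3 be periodic step functions: u1(s) = α1 for s mod 1 < ξ2 and β1 otherwise; u3(s) = α3 for s mod 1 < ξ1 and β3 otherwise. Then the shear flow u(x,t) = (u1(x2), 0, u3(x1 - t u1(x2))) is a weak solution of the 3d Euler equations on the torus, in the sense that for every divergence-free smooth test vector field φ compactly supported in time, ∫∫ [u·∂_t φ + ⟨u⊗u, ∇φ⟩] dx dt + ∫ u(x,0)·φ(x,0) dx = 0. -/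
open MeasureTheory

namespace StepShearAux

lemma slice_hasDerivAt {Φ : ℝ×ℝ×ℝ×ℝ → ℝ} (hΦ : ContDiff ℝ (⊤ : ℕ∞) Φ)
    (q v : ℝ×ℝ×ℝ×ℝ) (s : ℝ) :
    HasDerivAt (fun r : ℝ => Φ (q + r • v)) (fderiv ℝ Φ (q + s • v) v) s := by
  have h1 : HasDerivAt (fun r : ℝ => q + r • v) v s := by
    simpa using ((hasDerivAt_id s).smul_const v).const_add q
  exact (((hΦ.differentiable (by simp)) (q + s • v)).hasFDerivAt).comp_hasDerivAt s h1

noncomputable abbrev I01 : Set ℝ := Set.Icc 0 1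
noncomputable abbrev Box : Set (ℝ × ℝ × ℝ) := I01 ×ˢ I01 ×ˢ I01

instance : IsFiniteMeasure ((volume : Measure ℝ).restrict I01) :=
  ⟨by rw [Measure.restrict_apply_univ]; simp [I01, Real.volume_Icc]⟩

lemma integrable_bdd {α : Type*} [MeasurableSpace α] {μ : Measure α} [IsFiniteMeasure μ]
    {f : α → ℝ} (hm : AEStronglyMeasurable f μ) {C : ℝ} (hC : ∀ᵐ x ∂μ, ‖f x‖ ≤ C) :
    Integrable f μ :=
  ⟨hm, HasFiniteIntegral.of_bounded hC⟩

lemma box_prod_eq : (volume : Measure (ℝ×ℝ×ℝ)).restrict Box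
    = ((volume : Measure ℝ).restrict I01).prod
        (((volume : Measure ℝ).restrict I01).prod ((volume : Measure ℝ).restrict I01)) := by
  rw [Measure.prod_restrict, Measure.prod_restrict, ← Measure.volume_eq_prod,
    ← Measure.volume_eq_prod]

instance : IsFiniteMeasure ((volume : Measure (ℝ×ℝ×ℝ)).restrict Box) := by
  rw [box_prod_eq]; infer_instance

lemma sq_prod_eq : (volume : Measure (ℝ×ℝ)).restrict (I01 ×ˢ I01)
    = ((volume : Measure ℝ).restrict I01).prod ((volume : Measure ℝ).restrict I01) := by
  rw [Measure.prod_restrict, ← Measure.volume_eq_prod]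

instance : IsFiniteMeasure ((volume : Measure (ℝ×ℝ)).restrict (I01 ×ˢ I01)) := by
  rw [sq_prod_eq]; infer_instance

lemma integrableOn_box {f : ℝ×ℝ×ℝ → ℝ} (hm : AEStronglyMeasurable f (volume.restrict Box))
    {C : ℝ} (hC : ∀ x ∈ Box, ‖f x‖ ≤ C) : IntegrableOn f Box :=
  integrable_bdd hm (((ae_restrict_mem (measurableSet_Icc.prod
    (measurableSet_Icc.prod measurableSet_Icc)))).mono hC)

lemma integrable_box_prod {f : ℝ×ℝ×ℝ → ℝ} (hm : Measurable f) {C : ℝ}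
    (hC : ∀ x ∈ Box, ‖f x‖ ≤ C) :
    Integrable f (((volume : Measure ℝ).restrict I01).prod
        (((volume : Measure ℝ).restrict I01).prod ((volume : Measure ℝ).restrict I01))) := by
  rw [← box_prod_eq]; exact integrableOn_box hm.aestronglyMeasurable hC

lemma integral_box_eq {f : ℝ×ℝ×ℝ → ℝ} (hm : Measurable f) {C : ℝ} (hC : ∀ x ∈ Box, ‖f x‖ ≤ C) :
    ∫ x in Box, f x = ∫ x1 in I01, ∫ x2 in I01, ∫ x3 in I01, f (x1, x2, x3) := by
  rw [box_prod_eq, integral_prod _ (integrable_box_prod hm hC)]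
  refine integral_congr_ae (((ae_restrict_mem measurableSet_Icc)).mono fun x1 hx1 => ?_)
  dsimp only
  rw [integral_prod]
  rw [← sq_prod_eq]
  refine integrable_bdd (C := C) ((hm.comp (measurable_const.prodMk measurable_id)).aestronglyMeasurable)
    (((ae_restrict_mem (measurableSet_Icc.prod measurableSet_Icc))).mono fun p hp => ?_)
  exact hC (x1, p) (Set.mk_mem_prod hx1 hp)

lemma integral_box_swap {f : ℝ×ℝ×ℝ → ℝ} (hm : Measurable f) {C : ℝ} (hC : ∀ x ∈ Box, ‖f x‖ ≤ C) :
    ∫ x in Box, f x = ∫ p in I01 ×ˢ I01, ∫ x1 in I01, f (x1, p.1, p.2) := by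
  have hu : Function.uncurry (fun a (b : ℝ × ℝ) => f (a, b)) = f := by
    funext x; simp [Function.uncurry]
  rw [box_prod_eq, integral_prod _ (integrable_box_prod hm hC),
    integral_integral_swap (by rw [hu]; exact integrable_box_prod hm hC),
    Measure.prod_restrict, ← Measure.volume_eq_prod]

lemma intervalIntegrable_bdd {h : ℝ → ℝ} (hm : Measurable h) {C : ℝ}
    (hC : ∀ x, ‖h x‖ ≤ C) (a b : ℝ) : IntervalIntegrable h volume a b := by
  rw [intervalIntegrable_iff]
  haveI : IsFiniteMeasure (volume.restrict (Set.uIoc a b)) :=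
    ⟨by rw [Measure.restrict_apply_univ]; exact measure_Ioc_lt_top⟩
  exact integrable_bdd hm.aestronglyMeasurable (ae_of_all _ hC)

lemma periodic_shift_integral {h : ℝ → ℝ} (hper : Function.Periodic h 1)
    (hm : Measurable h) {C : ℝ} (hC : ∀ x ∈ I01, ‖h x‖ ≤ C) (c : ℝ) :
    ∫ x in I01, h (x - c) = ∫ x in I01, h x := by
  have hCg : ∀ x : ℝ, ‖h x‖ ≤ C := by
    intro x
    have h1 : h (Int.fract x) = h x := by
      rw [Int.fract]
      simpa using hper.sub_int_mul_eq (x := x) ⌊x⌋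
    rw [← h1]
    exact hC _ ⟨Int.fract_nonneg x, (Int.fract_lt_one x).le⟩
  have h1 : ∫ x in I01, h (x - c) = ∫ x in (0:ℝ)..1, h (x - c) := by
    rw [MeasureTheory.integral_Icc_eq_integral_Ioc, intervalIntegral.integral_of_le zero_le_one]
  have h2 : ∫ x in I01, h x = ∫ x in (0:ℝ)..1, h x := by
    rw [MeasureTheory.integral_Icc_eq_integral_Ioc, intervalIntegral.integral_of_le zero_le_one]
  rw [h1, h2, intervalIntegral.integral_comp_sub_right _ c]
  have e1 : (0:ℝ) - c = -c := by ring
  have e2 : (1:ℝ) - c = -c + 1 := by ring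
  rw [e1, e2]
  simpa using hper.intervalIntegral_add_eq (-c) 0

lemma integral_deriv_period_zero {g g' : ℝ → ℝ}
    (hd : ∀ s, HasDerivAt g (g' s) s) (hcont : Continuous g') (hper : g 1 = g 0) :
    ∫ x in I01, g' x = 0 := by
  rw [MeasureTheory.integral_Icc_eq_integral_Ioc, ← intervalIntegral.integral_of_le zero_le_one,
    intervalIntegral.integral_eq_sub_of_hasDerivAt (fun s _ => hd s)
      (hcont.intervalIntegrable 0 1), hper, sub_self]

lemma cov_lemma {U1 U3 w : ℝ → ℝ} (hU1m : Measurable U1) (hU3m : Measurable U3)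
    (hU3per : Function.Periodic U3 1)
    {A1 A3 W : ℝ} (hA1 : ∀ s, ‖U1 s‖ ≤ A1) (hA3 : ∀ s, ‖U3 s‖ ≤ A3)
    (hwm : Measurable w) (hW : ∀ s, ‖w s‖ ≤ W)
    (t : ℝ) {Ψ : ℝ×ℝ×ℝ×ℝ → ℝ} (hΨc : Continuous Ψ)
    (hΨper : ∀ t' y x2 x3 : ℝ, Ψ (t', y + 1, x2, x3) = Ψ (t', y, x2, x3)) :
    ∫ x in Box, w x.2.1 * U3 (x.1 - t * U1 x.2.1) * Ψ (t, x.1, x.2.1, x.2.2)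
      = ∫ x in Box, w x.2.1 * U3 x.1 * Ψ (t, x.1 + t * U1 x.2.1, x.2.1, x.2.2) := by
  have hA1' : 0 ≤ A1 := (norm_nonneg _).trans (hA1 0)
  have hA3' : 0 ≤ A3 := (norm_nonneg _).trans (hA3 0)
  have hW' : 0 ≤ W := (norm_nonneg _).trans (hW 0)
  set M : ℝ := 1 + |t| * A1 with hM
  have hM1 : (1:ℝ) ≤ M := by
    have : 0 ≤ |t| * A1 := mul_nonneg (abs_nonneg t) hA1'
    simp [hM]; linarith
  have hKc : IsCompact ((Set.Icc t t) ×ˢ (Set.Icc (-M) M) ×ˢ I01 ×ˢ I01) :=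
    isCompact_Icc.prod (isCompact_Icc.prod (isCompact_Icc.prod isCompact_Icc))
  obtain ⟨CΨ, hCΨ⟩ := hKc.exists_bound_of_continuousOn hΨc.continuousOn
  have hCΨ' : 0 ≤ CΨ := by
    refine (norm_nonneg (Ψ (t, 0, 0, 0))).trans (hCΨ _ ?_)
    refine Set.mk_mem_prod (by simp) (Set.mk_mem_prod ?_ (Set.mk_mem_prod (by simp [I01]) (by simp [I01])))
    constructor <;> [linarith; linarith]
  have hbd : ∀ y x2 x3 : ℝ, y ∈ Set.Icc (-M) M → x2 ∈ I01 → x3 ∈ I01 →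
      ‖Ψ (t, y, x2, x3)‖ ≤ CΨ := fun y x2 x3 hy h2 h3 =>
    hCΨ _ (Set.mk_mem_prod (by simp) (Set.mk_mem_prod hy (Set.mk_mem_prod h2 h3)))
  have harg : ∀ y u : ℝ, y ∈ I01 → ‖u‖ ≤ A1 → y + t * u ∈ Set.Icc (-M) M := by
    intro y u hy hu
    have h1 : |t * u| ≤ |t| * A1 := by
      rw [abs_mul]
      exact mul_le_mul_of_nonneg_left hu (abs_nonneg t)
    have h2 := abs_le.mp h1
    obtain ⟨hy0, hy1⟩ := hy
    constructor <;> simp [hM] <;> linarith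
  have hprod_bound : ∀ (u3 : ℝ → ℝ) (g : ℝ → ℝ), (∀ s, ‖u3 s‖ ≤ A3) → (∀ s, ‖g s‖ ≤ CΨ) →
      ∀ s1 s2 : ℝ, ‖w s1 * u3 s2 * g s2‖ ≤ W * A3 * CΨ := by
    intro u3 g hu3 hg s1 s2
    rw [norm_mul, norm_mul]
    exact mul_le_mul (mul_le_mul (hW s1) (hu3 s2) (norm_nonneg _) hW')
      (hg s2) (norm_nonneg _) (by positivity)
  -- measurability of both integrands
  have hmL : Measurable fun x : ℝ×ℝ×ℝ => w x.2.1 * U3 (x.1 - t * U1 x.2.1) * Ψ (t, x.1, x.2.1, x.2.2) := by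
    apply Measurable.mul
    · exact (hwm.comp (measurable_fst.comp measurable_snd)).mul
        (hU3m.comp (measurable_fst.sub (measurable_const.mul (hU1m.comp (measurable_fst.comp measurable_snd)))))
    · exact (hΨc.comp (continuous_const.prodMk (continuous_fst.prodMk
        ((continuous_fst.comp continuous_snd).prodMk (continuous_snd.comp continuous_snd))))).measurable
  have hmR : Measurable fun x : ℝ×ℝ×ℝ => w x.2.1 * U3 x.1 * Ψ (t, x.1 + t * U1 x.2.1, x.2.1, x.2.2) := by
    apply Measurable.mul
    · exact (hwm.comp (measurable_fst.comp measurable_snd)).mul (hU3m.comp measurable_fst)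
    · exact (hΨc.measurable).comp
        (measurable_const.prodMk ((measurable_fst.add
          (measurable_const.mul (hU1m.comp (measurable_fst.comp measurable_snd)))).prodMk
          ((measurable_fst.comp measurable_snd).prodMk (measurable_snd.comp measurable_snd))))
  -- bounds on Box
  have hbL : ∀ x ∈ Box, ‖w x.2.1 * U3 (x.1 - t * U1 x.2.1) * Ψ (t, x.1, x.2.1, x.2.2)‖ ≤ W * A3 * CΨ := by
    rintro ⟨x1, x2, x3⟩ ⟨h1, h2, h3⟩
    rw [norm_mul, norm_mul]
    have hx1 : x1 ∈ Set.Icc (-M) M := by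
      obtain ⟨a, b⟩ := h1; constructor <;> simp only [hM] <;> nlinarith [mul_nonneg (abs_nonneg t) hA1']
    refine mul_le_mul (mul_le_mul (hW x2) (hA3 _) (norm_nonneg _) hW')
      (hbd x1 x2 x3 hx1 h2 h3) (norm_nonneg _) (by positivity)
  have hbR : ∀ x ∈ Box, ‖w x.2.1 * U3 x.1 * Ψ (t, x.1 + t * U1 x.2.1, x.2.1, x.2.2)‖ ≤ W * A3 * CΨ := by
    rintro ⟨x1, x2, x3⟩ ⟨h1, h2, h3⟩
    rw [norm_mul, norm_mul]
    refine mul_le_mul (mul_le_mul (hW x2) (hA3 _) (norm_nonneg _) hW')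
      (hbd _ x2 x3 (harg x1 (U1 x2) h1 (hA1 x2)) h2 h3) (norm_nonneg _) (by positivity)
  rw [integral_box_swap hmL hbL, integral_box_swap hmR hbR]
  refine integral_congr_ae (((ae_restrict_mem ((measurableSet_Icc.prod measurableSet_Icc)))).mono
    fun p hp => ?_)
  dsimp only
  set c : ℝ := t * U1 p.1 with hc
  have key : ∫ x1 in I01, (fun y => w p.1 * U3 y * Ψ (t, y + c, p.1, p.2)) (x1 - c)
      = ∫ x1 in I01, (fun y => w p.1 * U3 y * Ψ (t, y + c, p.1, p.2)) x1 := by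
    refine periodic_shift_integral (h := fun y => w p.1 * U3 y * Ψ (t, y + c, p.1, p.2))
      ?_ ?_ (C := W * A3 * CΨ) ?_ c
    · intro y
      simp only [hU3per y]
      rw [show y + 1 + c = (y + c) + 1 by ring, hΨper]
    · exact (measurable_const.mul (hU3m)).mul
        ((hΨc.measurable).comp (measurable_const.prodMk (((measurable_id.add_const c)).prodMk
          (measurable_const.prodMk measurable_const))))
    · intro y hy
      rw [norm_mul, norm_mul]
      have hyc : y + c ∈ Set.Icc (-M) M := harg y (U1 p.1) hy (hA1 p.1)
      refine mul_le_mul (mul_le_mul (hW p.1) (hA3 _) (norm_nonneg _) hW')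
        (hbd _ p.1 p.2 hyc hp.1 hp.2) (norm_nonneg _) (by positivity)
  calc (∫ x1 in I01, w p.1 * U3 (x1 - c) * Ψ (t, x1, p.1, p.2))
      = ∫ x1 in I01, (fun y => w p.1 * U3 y * Ψ (t, y + c, p.1, p.2)) (x1 - c) := by
        refine integral_congr_ae (ae_of_all _ fun x1 => ?_)
        dsimp only
        rw [sub_add_cancel]
    _ = ∫ x1 in I01, (fun y => w p.1 * U3 y * Ψ (t, y + c, p.1, p.2)) x1 := key
    _ = ∫ x1 in I01, w p.1 * U3 x1 * Ψ (t, x1 + c, p.1, p.2) := rfl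


lemma measurableSet_box : MeasurableSet Box :=
  measurableSet_Icc.prod (measurableSet_Icc.prod measurableSet_Icc)

lemma exists_nonneg_bound {E : Type*} [NormedAddCommGroup E] {K : Set (ℝ×ℝ×ℝ×ℝ)}
    (hK : IsCompact K) {f : ℝ×ℝ×ℝ×ℝ → E} (hf : Continuous f) :
    ∃ C, 0 ≤ C ∧ ∀ q ∈ K, ‖f q‖ ≤ C := by
  obtain ⟨C, hC⟩ := hK.exists_bound_of_continuousOn hf.continuousOn
  exact ⟨max C 0, le_max_right _ _, fun q hq => (hC q hq).trans (le_max_left _ _)⟩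

lemma isCompact_K4 (a b c d : ℝ) :
    IsCompact ((Set.Icc a b) ×ˢ (Set.Icc c d) ×ˢ I01 ×ˢ I01) :=
  isCompact_Icc.prod (isCompact_Icc.prod (isCompact_Icc.prod isCompact_Icc))

lemma hasDerivAt_parametric {F F' : ℝ → ℝ×ℝ×ℝ → ℝ} (t0 : ℝ)
    (hmeas : ∀ t, AEStronglyMeasurable (F t) (volume.restrict Box))
    (hint : Integrable (F t0) (volume.restrict Box))
    (hmeas' : AEStronglyMeasurable (F' t0) (volume.restrict Box))
    {C : ℝ}
    (hbound : ∀ x ∈ Box, ∀ t ∈ Set.Ioo (t0-1) (t0+1), ‖F' t x‖ ≤ C)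
    (hdiff : ∀ x ∈ Box, ∀ t ∈ Set.Ioo (t0-1) (t0+1), HasDerivAt (fun s => F s x) (F' t x) t) :
    HasDerivAt (fun t => ∫ x in Box, F t x) (∫ x in Box, F' t0 x) t0 := by
  have hball : Metric.ball t0 1 = Set.Ioo (t0-1) (t0+1) := Real.ball_eq_Ioo t0 1
  refine (hasDerivAt_integral_of_dominated_loc_of_deriv_le (F := F) (F' := F')
    (bound := fun _ => C) (Metric.ball_mem_nhds t0 zero_lt_one)
    (Filter.Eventually.of_forall hmeas) hint hmeas' ?_ (integrable_const C) ?_).2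
  · refine (ae_restrict_mem measurableSet_box).mono fun x hx t ht => hbound x hx t ?_
    rwa [hball] at ht
  · refine (ae_restrict_mem measurableSet_box).mono fun x hx t ht => hdiff x hx t ?_
    rwa [hball] at ht

section Main

variable {U1 U3 : ℝ → ℝ} {A1 A3 : ℝ} {Φ1 Φ3 : ℝ×ℝ×ℝ×ℝ → ℝ}

lemma slice_t (hΦ : ContDiff ℝ (⊤ : ℕ∞) Φ1) (t x1 x2 x3 : ℝ) :
    HasDerivAt (fun τ => Φ1 (τ, x1, x2, x3)) (fderiv ℝ Φ1 (t, x1, x2, x3) (1,0,0,0)) t := by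
  simpa using slice_hasDerivAt hΦ (0, x1, x2, x3) (1, 0, 0, 0) t

lemma slice_x1 (hΦ : ContDiff ℝ (⊤ : ℕ∞) Φ1) (t x1 x2 x3 : ℝ) :
    HasDerivAt (fun s => Φ1 (t, s, x2, x3)) (fderiv ℝ Φ1 (t, x1, x2, x3) (0,1,0,0)) x1 := by
  simpa using slice_hasDerivAt hΦ (t, 0, x2, x3) (0, 1, 0, 0) x1

lemma slice_x3 (hΦ : ContDiff ℝ (⊤ : ℕ∞) Φ1) (t x1 x2 x3 : ℝ) :
    HasDerivAt (fun s => Φ1 (t, x1, x2, s)) (fderiv ℝ Φ1 (t, x1, x2, x3) (0,0,0,1)) x3 := by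
  simpa using slice_hasDerivAt hΦ (t, x1, x2, 0) (0, 0, 0, 1) x3

lemma slice_flow (hΦ : ContDiff ℝ (⊤ : ℕ∞) Φ3) (u t x1 x2 x3 : ℝ) :
    HasDerivAt (fun τ => Φ3 (τ, x1 + τ * u, x2, x3))
      (fderiv ℝ Φ3 (t, x1 + t * u, x2, x3) (1, u, 0, 0)) t := by
  simpa using slice_hasDerivAt hΦ (0, x1, x2, x3) (1, u, 0, 0) t

lemma norm_e1 : ‖((1:ℝ), (0:ℝ), (0:ℝ), (0:ℝ))‖ = 1 := by
  simp [Prod.norm_def]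

lemma norm_e2 : ‖((0:ℝ), (1:ℝ), (0:ℝ), (0:ℝ))‖ = 1 := by
  simp [Prod.norm_def]

lemma norm_e4 : ‖((0:ℝ), (0:ℝ), (0:ℝ), (1:ℝ))‖ = 1 := by
  simp [Prod.norm_def]

lemma norm_ev {u W : ℝ} (hu : ‖u‖ ≤ W) (hW : 0 ≤ W) : ‖((1:ℝ), u, (0:ℝ), (0:ℝ))‖ ≤ 1 + W := by
  simp only [Prod.norm_def]
  refine max_le (by simp; linarith) (max_le ?_ (max_le (by simp; linarith) (by simp; linarith)))
  simp only [Real.norm_eq_abs] at hu ⊢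
  linarith

lemma cont_fderiv_app (hΦ : ContDiff ℝ (⊤ : ℕ∞) Φ1) (v : ℝ×ℝ×ℝ×ℝ) :
    Continuous fun q => fderiv ℝ Φ1 q v :=
  (hΦ.continuous_fderiv (by simp)).clm_apply continuous_const

lemma meas_fderiv_slice (hΦ : ContDiff ℝ (⊤ : ℕ∞) Φ1) (t : ℝ) (v : ℝ×ℝ×ℝ×ℝ) :
    Measurable fun x : ℝ×ℝ×ℝ => fderiv ℝ Φ1 (t, x.1, x.2.1, x.2.2) v :=
  ((cont_fderiv_app hΦ v).comp (continuous_const.prodMk continuous_id)).measurable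

lemma mx2 : Measurable fun x : ℝ×ℝ×ℝ => x.2.1 := measurable_fst.comp measurable_snd

lemma mU1x (hU1m : Measurable U1) : Measurable fun x : ℝ×ℝ×ℝ => U1 x.2.1 := hU1m.comp mx2

lemma mU3b (hU1m : Measurable U1) (hU3m : Measurable U3) (t : ℝ) :
    Measurable fun x : ℝ×ℝ×ℝ => U3 (x.1 - t * U1 x.2.1) :=
  hU3m.comp (measurable_fst.sub (measurable_const.mul (mU1x hU1m)))

lemma Z11 (hU1m : Measurable U1) (hA1 : ∀ s, ‖U1 s‖ ≤ A1)
    (hΦ : ContDiff ℝ (⊤ : ℕ∞) Φ1) (hp1x : ∀ t y x2 x3 : ℝ, Φ1 (t, y + 1, x2, x3) = Φ1 (t, y, x2, x3))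
    (t : ℝ) :
    ∫ x in Box, U1 x.2.1 * U1 x.2.1 * fderiv ℝ Φ1 (t, x.1, x.2.1, x.2.2) (0,1,0,0) = 0 := by
  have hA1' : 0 ≤ A1 := (norm_nonneg _).trans (hA1 0)
  obtain ⟨C, hCnn, hC⟩ := exists_nonneg_bound (isCompact_K4 t t 0 1)
    (hΦ.continuous_fderiv (by simp))
  have hm : Measurable fun x : ℝ×ℝ×ℝ =>
      U1 x.2.1 * U1 x.2.1 * fderiv ℝ Φ1 (t, x.1, x.2.1, x.2.2) ((0:ℝ),(1:ℝ),(0:ℝ),(0:ℝ)) :=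
    ((mU1x hU1m).mul (mU1x hU1m)).mul (meas_fderiv_slice hΦ t _)
  have hb : ∀ x ∈ Box, ‖U1 x.2.1 * U1 x.2.1 *
      fderiv ℝ Φ1 (t, x.1, x.2.1, x.2.2) ((0:ℝ),(1:ℝ),(0:ℝ),(0:ℝ))‖ ≤ A1 * A1 * C := by
    rintro ⟨x1, x2, x3⟩ ⟨h1, h2, h3⟩
    rw [norm_mul, norm_mul]
    have hf : ‖fderiv ℝ Φ1 (t, x1, x2, x3) ((0:ℝ),(1:ℝ),(0:ℝ),(0:ℝ))‖ ≤ C := by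
      have := (fderiv ℝ Φ1 (t, x1, x2, x3)).le_opNorm ((0:ℝ),(1:ℝ),(0:ℝ),(0:ℝ))
      rw [norm_e2, mul_one] at this
      exact this.trans (hC _ (Set.mk_mem_prod (by simp) (Set.mk_mem_prod h1 (Set.mk_mem_prod h2 h3))))
    exact mul_le_mul (mul_le_mul (hA1 x2) (hA1 x2) (norm_nonneg _) hA1') hf
      (norm_nonneg _) (by positivity)
  rw [integral_box_swap hm hb]
  have hinner : (fun p : ℝ×ℝ => ∫ x1 in I01,
      (fun x : ℝ×ℝ×ℝ => U1 x.2.1 * U1 x.2.1 *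
        fderiv ℝ Φ1 (t, x.1, x.2.1, x.2.2) ((0:ℝ),(1:ℝ),(0:ℝ),(0:ℝ))) (x1, p.1, p.2))
      = fun _ => 0 := by
    funext p
    dsimp only
    rw [MeasureTheory.integral_const_mul]
    have h0 : ∫ x1 in I01, fderiv ℝ Φ1 (t, x1, p.1, p.2) ((0:ℝ),(1:ℝ),(0:ℝ),(0:ℝ)) = 0 := by
      refine integral_deriv_period_zero (fun s => slice_x1 hΦ t s p.1 p.2) ?_ ?_
      · exact (cont_fderiv_app hΦ _).comp (continuous_const.prodMk (continuous_id.prodMk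
          (continuous_const.prodMk continuous_const)))
      · simpa using hp1x t 0 p.1 p.2
    rw [h0, mul_zero]
  rw [hinner, integral_zero]

lemma Z13 (hU1m : Measurable U1) (hU3m : Measurable U3)
    (hA1 : ∀ s, ‖U1 s‖ ≤ A1) (hA3 : ∀ s, ‖U3 s‖ ≤ A3)
    (hΦ : ContDiff ℝ (⊤ : ℕ∞) Φ1) (hp1z : ∀ t x1 x2 y : ℝ, Φ1 (t, x1, x2, y + 1) = Φ1 (t, x1, x2, y))
    (t : ℝ) :
    ∫ x in Box, U1 x.2.1 * U3 (x.1 - t * U1 x.2.1) *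
      fderiv ℝ Φ1 (t, x.1, x.2.1, x.2.2) (0,0,0,1) = 0 := by
  have hA1' : 0 ≤ A1 := (norm_nonneg _).trans (hA1 0)
  have hA3' : 0 ≤ A3 := (norm_nonneg _).trans (hA3 0)
  obtain ⟨C, hCnn, hC⟩ := exists_nonneg_bound (isCompact_K4 t t 0 1)
    (hΦ.continuous_fderiv (by simp))
  have hm : Measurable fun x : ℝ×ℝ×ℝ => U1 x.2.1 * U3 (x.1 - t * U1 x.2.1) *
      fderiv ℝ Φ1 (t, x.1, x.2.1, x.2.2) ((0:ℝ),(0:ℝ),(0:ℝ),(1:ℝ)) :=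
    ((mU1x hU1m).mul (mU3b hU1m hU3m t)).mul (meas_fderiv_slice hΦ t _)
  have hb : ∀ x ∈ Box, ‖U1 x.2.1 * U3 (x.1 - t * U1 x.2.1) *
      fderiv ℝ Φ1 (t, x.1, x.2.1, x.2.2) ((0:ℝ),(0:ℝ),(0:ℝ),(1:ℝ))‖ ≤ A1 * A3 * C := by
    rintro ⟨x1, x2, x3⟩ ⟨h1, h2, h3⟩
    rw [norm_mul, norm_mul]
    have hf : ‖fderiv ℝ Φ1 (t, x1, x2, x3) ((0:ℝ),(0:ℝ),(0:ℝ),(1:ℝ))‖ ≤ C := by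
      have := (fderiv ℝ Φ1 (t, x1, x2, x3)).le_opNorm ((0:ℝ),(0:ℝ),(0:ℝ),(1:ℝ))
      rw [norm_e4, mul_one] at this
      exact this.trans (hC _ (Set.mk_mem_prod (by simp) (Set.mk_mem_prod h1 (Set.mk_mem_prod h2 h3))))
    exact mul_le_mul (mul_le_mul (hA1 x2) (hA3 _) (norm_nonneg _) hA1') hf
      (norm_nonneg _) (by positivity)
  rw [integral_box_eq hm hb]
  have houter : (fun x1 : ℝ => ∫ x2 in I01, ∫ x3 in I01,
      (fun x : ℝ×ℝ×ℝ => U1 x.2.1 * U3 (x.1 - t * U1 x.2.1) *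
        fderiv ℝ Φ1 (t, x.1, x.2.1, x.2.2) ((0:ℝ),(0:ℝ),(0:ℝ),(1:ℝ))) (x1, x2, x3))
      = fun _ => 0 := by
    funext x1
    dsimp only
    have hinner : (fun x2 : ℝ => ∫ x3 in I01, U1 x2 * U3 (x1 - t * U1 x2) *
        fderiv ℝ Φ1 (t, x1, x2, x3) ((0:ℝ),(0:ℝ),(0:ℝ),(1:ℝ))) = fun _ => 0 := by
      funext x2
      rw [MeasureTheory.integral_const_mul]
      have h0 : ∫ x3 in I01, fderiv ℝ Φ1 (t, x1, x2, x3) ((0:ℝ),(0:ℝ),(0:ℝ),(1:ℝ)) = 0 := by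
        refine integral_deriv_period_zero (fun s => slice_x3 hΦ t x1 x2 s) ?_ ?_
        · exact (cont_fderiv_app hΦ _).comp (continuous_const.prodMk (continuous_const.prodMk
            (continuous_const.prodMk continuous_id)))
        · simpa using hp1z t x1 x2 0
      rw [h0, mul_zero]
    rw [hinner, integral_zero]
  rw [houter, integral_zero]

lemma Z33 (hU1m : Measurable U1) (hU3m : Measurable U3)
    (hA1 : ∀ s, ‖U1 s‖ ≤ A1) (hA3 : ∀ s, ‖U3 s‖ ≤ A3)
    (hΦ : ContDiff ℝ (⊤ : ℕ∞) Φ3) (hp3z : ∀ t x1 x2 y : ℝ, Φ3 (t, x1, x2, y + 1) = Φ3 (t, x1, x2, y))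
    (t : ℝ) :
    ∫ x in Box, U3 (x.1 - t * U1 x.2.1) * U3 (x.1 - t * U1 x.2.1) *
      fderiv ℝ Φ3 (t, x.1, x.2.1, x.2.2) (0,0,0,1) = 0 := by
  have hA3' : 0 ≤ A3 := (norm_nonneg _).trans (hA3 0)
  obtain ⟨C, hCnn, hC⟩ := exists_nonneg_bound (isCompact_K4 t t 0 1)
    (hΦ.continuous_fderiv (by simp))
  have hm : Measurable fun x : ℝ×ℝ×ℝ => U3 (x.1 - t * U1 x.2.1) * U3 (x.1 - t * U1 x.2.1) *
      fderiv ℝ Φ3 (t, x.1, x.2.1, x.2.2) ((0:ℝ),(0:ℝ),(0:ℝ),(1:ℝ)) :=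
    ((mU3b hU1m hU3m t).mul (mU3b hU1m hU3m t)).mul (meas_fderiv_slice hΦ t _)
  have hb : ∀ x ∈ Box, ‖U3 (x.1 - t * U1 x.2.1) * U3 (x.1 - t * U1 x.2.1) *
      fderiv ℝ Φ3 (t, x.1, x.2.1, x.2.2) ((0:ℝ),(0:ℝ),(0:ℝ),(1:ℝ))‖ ≤ A3 * A3 * C := by
    rintro ⟨x1, x2, x3⟩ ⟨h1, h2, h3⟩
    rw [norm_mul, norm_mul]
    have hf : ‖fderiv ℝ Φ3 (t, x1, x2, x3) ((0:ℝ),(0:ℝ),(0:ℝ),(1:ℝ))‖ ≤ C := by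
      have := (fderiv ℝ Φ3 (t, x1, x2, x3)).le_opNorm ((0:ℝ),(0:ℝ),(0:ℝ),(1:ℝ))
      rw [norm_e4, mul_one] at this
      exact this.trans (hC _ (Set.mk_mem_prod (by simp) (Set.mk_mem_prod h1 (Set.mk_mem_prod h2 h3))))
    exact mul_le_mul (mul_le_mul (hA3 _) (hA3 _) (norm_nonneg _) hA3') hf
      (norm_nonneg _) (by positivity)
  rw [integral_box_eq hm hb]
  have houter : (fun x1 : ℝ => ∫ x2 in I01, ∫ x3 in I01,
      (fun x : ℝ×ℝ×ℝ => U3 (x.1 - t * U1 x.2.1) * U3 (x.1 - t * U1 x.2.1) *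
        fderiv ℝ Φ3 (t, x.1, x.2.1, x.2.2) ((0:ℝ),(0:ℝ),(0:ℝ),(1:ℝ))) (x1, x2, x3))
      = fun _ => 0 := by
    funext x1
    dsimp only
    have hinner : (fun x2 : ℝ => ∫ x3 in I01, U3 (x1 - t * U1 x2) * U3 (x1 - t * U1 x2) *
        fderiv ℝ Φ3 (t, x1, x2, x3) ((0:ℝ),(0:ℝ),(0:ℝ),(1:ℝ))) = fun _ => 0 := by
      funext x2
      rw [MeasureTheory.integral_const_mul]
      have h0 : ∫ x3 in I01, fderiv ℝ Φ3 (t, x1, x2, x3) ((0:ℝ),(0:ℝ),(0:ℝ),(1:ℝ)) = 0 := by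
        refine integral_deriv_period_zero (fun s => slice_x3 hΦ t x1 x2 s) ?_ ?_
        · exact (cont_fderiv_app hΦ _).comp (continuous_const.prodMk (continuous_const.prodMk
            (continuous_const.prodMk continuous_id)))
        · simpa using hp3z t x1 x2 0
      rw [h0, mul_zero]
    rw [hinner, integral_zero]
  rw [houter, integral_zero]

lemma abs_window {t t0 : ℝ} (ht : t ∈ Set.Ioo (t0-1) (t0+1)) : |t| ≤ |t0| + 1 := by
  obtain ⟨h1, h2⟩ := ht
  have := le_abs_self t0
  have := neg_abs_le t0
  rw [abs_le]
  constructor <;> linarith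

lemma arg_mem {x1 u t A1 : ℝ} (hx1 : x1 ∈ I01) (hu : ‖u‖ ≤ A1) (ht : |t| ≤ |t0| + 1) :
    x1 + t * u ∈ Set.Icc (-(1 + (|t0|+1) * A1)) (1 + (|t0|+1) * A1) := by
  have hA1' : 0 ≤ A1 := (norm_nonneg _).trans hu
  obtain ⟨h0, h1⟩ := hx1
  rw [Real.norm_eq_abs] at hu
  have htu : |t * u| ≤ (|t0| + 1) * A1 := by
    rw [abs_mul]
    exact mul_le_mul ht hu (abs_nonneg _) (by positivity)
  have := abs_le.mp htu
  exact Set.mem_Icc.mpr ⟨by linarith [this.1], by linarith [this.2]⟩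

lemma clm_expand (L : ℝ×ℝ×ℝ×ℝ →L[ℝ] ℝ) (u : ℝ) :
    L (1, u, 0, 0) = L (1,0,0,0) + u * L (0,1,0,0) := by
  have h : ((1:ℝ), u, (0:ℝ), (0:ℝ))
      = ((1:ℝ),(0:ℝ),(0:ℝ),(0:ℝ)) + u • ((0:ℝ),(1:ℝ),(0:ℝ),(0:ℝ)) := by simp
  rw [h, map_add, L.map_smul, smul_eq_mul]

lemma hasDerivAt_PP (hU1m : Measurable U1) (hA1 : ∀ s, ‖U1 s‖ ≤ A1)
    (hΦ : ContDiff ℝ (⊤ : ℕ∞) Φ1) (t0 : ℝ) :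
    HasDerivAt (fun t => ∫ x in Box, U1 x.2.1 * Φ1 (t, x.1, x.2.1, x.2.2))
      (∫ x in Box, U1 x.2.1 * fderiv ℝ Φ1 (t0, x.1, x.2.1, x.2.2) (1,0,0,0)) t0 := by
  have hA1' : 0 ≤ A1 := (norm_nonneg _).trans (hA1 0)
  obtain ⟨C, hCnn, hC⟩ := exists_nonneg_bound (isCompact_K4 (t0-1) (t0+1) 0 1)
    (hΦ.continuous_fderiv (by simp))
  obtain ⟨D, hDnn, hD⟩ := exists_nonneg_bound (isCompact_K4 (t0-1) (t0+1) 0 1) hΦ.continuous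
  have hmt : ∀ t : ℝ, Measurable fun x : ℝ×ℝ×ℝ => U1 x.2.1 * Φ1 (t, x.1, x.2.1, x.2.2) := by
    intro t
    exact (mU1x hU1m).mul
      ((hΦ.continuous.comp (continuous_const.prodMk continuous_id)).measurable)
  refine hasDerivAt_parametric
    (F' := fun t x => U1 x.2.1 * fderiv ℝ Φ1 (t, x.1, x.2.1, x.2.2) (1,0,0,0))
    t0 (fun t => (hmt t).aestronglyMeasurable) ?_ ?_ (C := A1 * C) ?_ ?_
  · refine integrableOn_box (hmt t0).aestronglyMeasurable (C := A1 * D) ?_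
    rintro ⟨x1, x2, x3⟩ ⟨h1, h2, h3⟩
    rw [norm_mul]
    refine mul_le_mul (hA1 x2) (hD _ ?_) (norm_nonneg _) hA1'
    exact Set.mk_mem_prod (by constructor <;> linarith) (Set.mk_mem_prod h1 (Set.mk_mem_prod h2 h3))
  · exact ((mU1x hU1m).mul (meas_fderiv_slice hΦ t0 _)).aestronglyMeasurable
  · rintro ⟨x1, x2, x3⟩ ⟨h1, h2, h3⟩ t ht
    rw [norm_mul]
    refine mul_le_mul (hA1 x2) ?_ (norm_nonneg _) hA1'
    have := (fderiv ℝ Φ1 (t, x1, x2, x3)).le_opNorm ((1:ℝ),(0:ℝ),(0:ℝ),(0:ℝ))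
    rw [norm_e1, mul_one] at this
    refine this.trans (hC _ ?_)
    exact Set.mk_mem_prod (by constructor <;> [linarith [ht.1]; linarith [ht.2]])
      (Set.mk_mem_prod h1 (Set.mk_mem_prod h2 h3))
  · intro x _ t _
    exact (slice_t hΦ t x.1 x.2.1 x.2.2).const_mul (U1 x.2.1)

lemma hasDerivAt_QQ (hU1m : Measurable U1) (hU3m : Measurable U3)
    (hA1 : ∀ s, ‖U1 s‖ ≤ A1) (hA3 : ∀ s, ‖U3 s‖ ≤ A3)
    (hΦ : ContDiff ℝ (⊤ : ℕ∞) Φ3) (t0 : ℝ) :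
    HasDerivAt (fun t => ∫ x in Box, U3 x.1 * Φ3 (t, x.1 + t * U1 x.2.1, x.2.1, x.2.2))
      (∫ x in Box, U3 x.1 *
        fderiv ℝ Φ3 (t0, x.1 + t0 * U1 x.2.1, x.2.1, x.2.2) (1, U1 x.2.1, 0, 0)) t0 := by
  have hA1' : 0 ≤ A1 := (norm_nonneg _).trans (hA1 0)
  have hA3' : 0 ≤ A3 := (norm_nonneg _).trans (hA3 0)
  obtain ⟨C, hCnn, hC⟩ := exists_nonneg_bound
    (isCompact_K4 (t0-1) (t0+1) (-(1 + (|t0|+1) * A1)) (1 + (|t0|+1) * A1))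
    (hΦ.continuous_fderiv (by simp))
  obtain ⟨D, hDnn, hD⟩ := exists_nonneg_bound
    (isCompact_K4 (t0-1) (t0+1) (-(1 + (|t0|+1) * A1)) (1 + (|t0|+1) * A1)) hΦ.continuous
  have hmt : ∀ t : ℝ, Measurable fun x : ℝ×ℝ×ℝ =>
      U3 x.1 * Φ3 (t, x.1 + t * U1 x.2.1, x.2.1, x.2.2) := by
    intro t
    exact (hU3m.comp measurable_fst).mul ((hΦ.continuous.measurable).comp
      (measurable_const.prodMk ((measurable_fst.add (measurable_const.mul (mU1x hU1m))).prodMk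
        (mx2.prodMk (measurable_snd.comp measurable_snd)))))
  have ht0abs : |t0| ≤ |t0| + 1 := by linarith
  refine hasDerivAt_parametric
    (F' := fun t x => U3 x.1 *
      fderiv ℝ Φ3 (t, x.1 + t * U1 x.2.1, x.2.1, x.2.2) (1, U1 x.2.1, 0, 0))
    t0 (fun t => (hmt t).aestronglyMeasurable) ?_ ?_ (C := A3 * (C * (1 + A1))) ?_ ?_
  · refine integrableOn_box (hmt t0).aestronglyMeasurable (C := A3 * D) ?_
    rintro ⟨x1, x2, x3⟩ ⟨h1, h2, h3⟩
    rw [norm_mul]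
    refine mul_le_mul (hA3 x1) (hD _ ?_) (norm_nonneg _) hA3'
    exact Set.mk_mem_prod (by constructor <;> linarith)
      (Set.mk_mem_prod (arg_mem h1 (hA1 x2) ht0abs) (Set.mk_mem_prod h2 h3))
  · have hmarg : Measurable fun x : ℝ×ℝ×ℝ =>
        ((t0, x.1 + t0 * U1 x.2.1, x.2.1, x.2.2) : ℝ×ℝ×ℝ×ℝ) :=
      measurable_const.prodMk ((measurable_fst.add (measurable_const.mul (mU1x hU1m))).prodMk
        (mx2.prodMk (measurable_snd.comp measurable_snd)))
    have heq : (fun x : ℝ×ℝ×ℝ => U3 x.1 *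
        fderiv ℝ Φ3 (t0, x.1 + t0 * U1 x.2.1, x.2.1, x.2.2) (1, U1 x.2.1, 0, 0))
        = fun x : ℝ×ℝ×ℝ => U3 x.1 *
          (fderiv ℝ Φ3 (t0, x.1 + t0 * U1 x.2.1, x.2.1, x.2.2) (1,0,0,0)
           + U1 x.2.1 * fderiv ℝ Φ3 (t0, x.1 + t0 * U1 x.2.1, x.2.1, x.2.2) (0,1,0,0)) := by
      funext x
      rw [clm_expand]
    refine Measurable.aestronglyMeasurable ?_
    have hdec : Measurable fun x : ℝ×ℝ×ℝ => U3 x.1 *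
          (fderiv ℝ Φ3 (t0, x.1 + t0 * U1 x.2.1, x.2.1, x.2.2) (1,0,0,0)
           + U1 x.2.1 * fderiv ℝ Φ3 (t0, x.1 + t0 * U1 x.2.1, x.2.1, x.2.2) (0,1,0,0)) :=
      (hU3m.comp measurable_fst).mul
        ((((cont_fderiv_app hΦ _).measurable).comp hmarg).add
          ((mU1x hU1m).mul (((cont_fderiv_app hΦ _).measurable).comp hmarg)))
    rw [← heq] at hdec
    exact hdec
  · rintro ⟨x1, x2, x3⟩ ⟨h1, h2, h3⟩ t ht
    rw [norm_mul]
    refine mul_le_mul (hA3 x1) ?_ (norm_nonneg _) hA3'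
    have h5 := (fderiv ℝ Φ3 (t, x1 + t * U1 x2, x2, x3)).le_opNorm ((1:ℝ), U1 x2, (0:ℝ), (0:ℝ))
    refine h5.trans ?_
    have hv := norm_ev (hA1 x2) hA1'
    have hq : ‖fderiv ℝ Φ3 (t, x1 + t * U1 x2, x2, x3)‖ ≤ C := by
      refine hC _ ?_
      exact Set.mk_mem_prod (by constructor <;> [linarith [ht.1]; linarith [ht.2]])
        (Set.mk_mem_prod (arg_mem h1 (hA1 x2) (abs_window ht)) (Set.mk_mem_prod h2 h3))
    exact mul_le_mul hq hv (norm_nonneg _) hCnn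
  · intro x _ t _
    exact (slice_flow hΦ (U1 x.2.1) t x.1 x.2.1 x.2.2).const_mul (U3 x.1)

lemma norm_add6 (a b c d e f : ℝ) :
    ‖a+b+c+d+e+f‖ ≤ ‖a‖+‖b‖+‖c‖+‖d‖+‖e‖+‖f‖ :=
  (norm_add_le _ f).trans (add_le_add_left ((norm_add_le _ e).trans (add_le_add_left
    ((norm_add_le _ d).trans (add_le_add_left ((norm_add_le _ c).trans
      (add_le_add_left (norm_add_le a b) _)) _)) _)) _)

lemma fderiv_shift (hΦ : ContDiff ℝ (⊤ : ℕ∞) Φ1) (c : ℝ×ℝ×ℝ×ℝ)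
    (hper : ∀ q, Φ1 (q + c) = Φ1 q) (q : ℝ×ℝ×ℝ×ℝ) :
    fderiv ℝ Φ1 (q + c) = fderiv ℝ Φ1 q := by
  have hd : HasFDerivAt (fun p => Φ1 (p + c)) (fderiv ℝ Φ1 (q + c)) q := by
    have h := ((hΦ.differentiable (by simp)) (q + c)).hasFDerivAt
    have h2 := h.comp q ((hasFDerivAt_id q).add_const c)
    simpa [Function.comp_def] using h2
  have he : (fun p => Φ1 (p + c)) = Φ1 := funext hper
  rw [he] at hd
  exact hd.fderiv.symm

lemma fderiv_per_x1 (hΦ : ContDiff ℝ (⊤ : ℕ∞) Φ1)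
    (hp : ∀ t y x2 x3 : ℝ, Φ1 (t, y + 1, x2, x3) = Φ1 (t, y, x2, x3))
    (t y x2 x3 : ℝ) :
    fderiv ℝ Φ1 (t, y + 1, x2, x3) = fderiv ℝ Φ1 (t, y, x2, x3) := by
  have h : ((t, y + 1, x2, x3) : ℝ×ℝ×ℝ×ℝ) = (t, y, x2, x3) + (0,1,0,0) := by simp
  rw [h]
  refine fderiv_shift hΦ _ ?_ _
  rintro ⟨a, b, cc, d⟩
  have h2 : ((a, b, cc, d) : ℝ×ℝ×ℝ×ℝ) + (0,1,0,0) = (a, b + 1, cc, d) := by simp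
  rw [h2]
  exact hp a b cc d

lemma fderiv_vanish (hΦ : ContDiff ℝ (⊤ : ℕ∞) Φ1) {Tm : ℝ}
    (hs : ∀ q : ℝ×ℝ×ℝ×ℝ, Tm ≤ q.1 → Φ1 q = 0) {q : ℝ×ℝ×ℝ×ℝ} (hq : Tm < q.1) :
    fderiv ℝ Φ1 q = 0 := by
  have hopen : IsOpen {p : ℝ×ℝ×ℝ×ℝ | Tm < p.1} := isOpen_lt continuous_const continuous_fst
  have hev : Φ1 =ᶠ[nhds q] (fun _ => (0:ℝ)) :=
    Filter.eventuallyEq_of_mem (hopen.mem_nhds hq) (fun p hp => hs p (le_of_lt hp))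
  rw [hev.fderiv_eq]
  exact fderiv_const_apply 0

lemma int_term {c : ℝ×ℝ×ℝ → ℝ} (hc : Measurable c) {Cc : ℝ} (hCc : ∀ x ∈ Box, ‖c x‖ ≤ Cc)
    (hΦ : ContDiff ℝ (⊤ : ℕ∞) Φ1) (t : ℝ) (v : ℝ×ℝ×ℝ×ℝ) :
    IntegrableOn (fun x : ℝ×ℝ×ℝ => c x * fderiv ℝ Φ1 (t, x.1, x.2.1, x.2.2) v) Box := by
  obtain ⟨C, hCnn, hC⟩ := exists_nonneg_bound (isCompact_K4 t t 0 1)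
    (hΦ.continuous_fderiv (by simp))
  have hCc' : 0 ≤ Cc := by
    refine (norm_nonneg (c (0,0,0))).trans (hCc (0,0,0) ?_)
    refine Set.mk_mem_prod (by simp [I01]) (Set.mk_mem_prod (by simp [I01]) (by simp [I01]))
  refine integrableOn_box ((hc.mul (meas_fderiv_slice hΦ t v)).aestronglyMeasurable)
    (C := Cc * (C * ‖v‖)) ?_
  rintro ⟨x1, x2, x3⟩ hx
  obtain ⟨h1, h2, h3⟩ := hx
  rw [norm_mul]
  refine mul_le_mul (hCc _ ⟨h1, h2, h3⟩) ?_ (norm_nonneg _) hCc'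
  refine ((fderiv ℝ Φ1 (t, x1, x2, x3)).le_opNorm v).trans ?_
  refine mul_le_mul_of_nonneg_right (hC _ ?_) (norm_nonneg v)
  exact Set.mk_mem_prod (by simp) (Set.mk_mem_prod h1 (Set.mk_mem_prod h2 h3))

lemma Qval (hU1m : Measurable U1) (hU3m : Measurable U3)
    (hA1 : ∀ s, ‖U1 s‖ ≤ A1) (hA3 : ∀ s, ‖U3 s‖ ≤ A3)
    (hU3per : Function.Periodic U3 1)
    (h3 : ContDiff ℝ (⊤ : ℕ∞) Φ3)
    (hp3x : ∀ t y x2 x3 : ℝ, Φ3 (t, y + 1, x2, x3) = Φ3 (t, y, x2, x3))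
    (t0 : ℝ) :
    (∫ x in Box, U3 x.1 * fderiv ℝ Φ3 (t0, x.1 + t0 * U1 x.2.1, x.2.1, x.2.2) (1, U1 x.2.1, 0, 0))
      = (∫ x in Box, U3 (x.1 - t0 * U1 x.2.1) * fderiv ℝ Φ3 (t0, x.1, x.2.1, x.2.2) (1,0,0,0))
        + ∫ x in Box, U3 (x.1 - t0 * U1 x.2.1) * U1 x.2.1 *
            fderiv ℝ Φ3 (t0, x.1, x.2.1, x.2.2) (0,1,0,0) := by
  have hA1' : 0 ≤ A1 := (norm_nonneg _).trans (hA1 0)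
  have hA3' : 0 ≤ A3 := (norm_nonneg _).trans (hA3 0)
  have ht0 : |t0| ≤ |t0| + 1 := by linarith
  -- change of variables identities
  have per0 : ∀ v : ℝ×ℝ×ℝ×ℝ, ∀ t' y x2 x3 : ℝ,
      (fun q : ℝ×ℝ×ℝ×ℝ => fderiv ℝ Φ3 q v) (t', y + 1, x2, x3)
        = (fun q : ℝ×ℝ×ℝ×ℝ => fderiv ℝ Φ3 q v) (t', y, x2, x3) := by
    intro v t' y x2 x3
    dsimp only
    rw [fderiv_per_x1 h3 hp3x]
  have c1 : (∫ x in Box, U3 (x.1 - t0 * U1 x.2.1) * fderiv ℝ Φ3 (t0, x.1, x.2.1, x.2.2) ((1:ℝ),(0:ℝ),(0:ℝ),(0:ℝ)))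
      = ∫ x in Box, U3 x.1 * fderiv ℝ Φ3 (t0, x.1 + t0 * U1 x.2.1, x.2.1, x.2.2) ((1:ℝ),(0:ℝ),(0:ℝ),(0:ℝ)) := by
    have h := cov_lemma (w := fun _ => (1:ℝ)) hU1m hU3m hU3per hA1 hA3 measurable_const
      (W := 1) (fun s => by simp) t0 (Ψ := fun q => fderiv ℝ Φ3 q ((1:ℝ),(0:ℝ),(0:ℝ),(0:ℝ)))
      (cont_fderiv_app h3 _) (per0 _)
    simpa using h
  have c2 : (∫ x in Box, U1 x.2.1 * U3 (x.1 - t0 * U1 x.2.1) * fderiv ℝ Φ3 (t0, x.1, x.2.1, x.2.2) ((0:ℝ),(1:ℝ),(0:ℝ),(0:ℝ)))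
      = ∫ x in Box, U1 x.2.1 * U3 x.1 * fderiv ℝ Φ3 (t0, x.1 + t0 * U1 x.2.1, x.2.1, x.2.2) ((0:ℝ),(1:ℝ),(0:ℝ),(0:ℝ)) := by
    have h := cov_lemma (w := U1) hU1m hU3m hU3per hA1 hA3 hU1m hA1 t0
      (Ψ := fun q => fderiv ℝ Φ3 q ((0:ℝ),(1:ℝ),(0:ℝ),(0:ℝ)))
      (cont_fderiv_app h3 _) (per0 _)
    simpa using h
  -- integrability of the two split pieces (shifted argument)
  obtain ⟨C, hCnn, hC⟩ := exists_nonneg_bound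
    (isCompact_K4 t0 t0 (-(1 + (|t0|+1) * A1)) (1 + (|t0|+1) * A1))
    (h3.continuous_fderiv (by simp))
  have hmarg : Measurable fun x : ℝ×ℝ×ℝ =>
      ((t0, x.1 + t0 * U1 x.2.1, x.2.1, x.2.2) : ℝ×ℝ×ℝ×ℝ) :=
    measurable_const.prodMk ((measurable_fst.add (measurable_const.mul (mU1x hU1m))).prodMk
      (mx2.prodMk (measurable_snd.comp measurable_snd)))
  have hfb : ∀ (v : ℝ×ℝ×ℝ×ℝ), ∀ x ∈ Box,
      ‖fderiv ℝ Φ3 (t0, x.1 + t0 * U1 x.2.1, x.2.1, x.2.2) v‖ ≤ C * ‖v‖ := by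
    rintro v ⟨x1, x2, x3⟩ ⟨h1, h2, h3x⟩
    refine ((fderiv ℝ Φ3 _).le_opNorm v).trans (mul_le_mul_of_nonneg_right (hC _ ?_) (norm_nonneg v))
    exact Set.mk_mem_prod (by simp) (Set.mk_mem_prod (arg_mem h1 (hA1 x2) ht0) (Set.mk_mem_prod h2 h3x))
  have iA : Integrable (fun x : ℝ×ℝ×ℝ => U3 x.1 *
      fderiv ℝ Φ3 (t0, x.1 + t0 * U1 x.2.1, x.2.1, x.2.2) ((1:ℝ),(0:ℝ),(0:ℝ),(0:ℝ)))
      (volume.restrict Box) := by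
    refine integrableOn_box ((hU3m.comp measurable_fst).mul
      (((cont_fderiv_app h3 _).measurable).comp hmarg)).aestronglyMeasurable (C := A3 * (C * 1)) ?_
    intro x hx
    rw [norm_mul]
    refine mul_le_mul (hA3 _) ?_ (norm_nonneg _) hA3'
    have := hfb ((1:ℝ),(0:ℝ),(0:ℝ),(0:ℝ)) x hx
    rwa [norm_e1] at this
  have iB : Integrable (fun x : ℝ×ℝ×ℝ => U1 x.2.1 * (U3 x.1 *
      fderiv ℝ Φ3 (t0, x.1 + t0 * U1 x.2.1, x.2.1, x.2.2) ((0:ℝ),(1:ℝ),(0:ℝ),(0:ℝ))))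
      (volume.restrict Box) := by
    refine integrableOn_box ((mU1x hU1m).mul ((hU3m.comp measurable_fst).mul
      (((cont_fderiv_app h3 _).measurable).comp hmarg))).aestronglyMeasurable
      (C := A1 * (A3 * (C * 1))) ?_
    intro x hx
    rw [norm_mul, norm_mul]
    have hf := hfb ((0:ℝ),(1:ℝ),(0:ℝ),(0:ℝ)) x hx
    rw [norm_e2] at hf
    refine mul_le_mul (hA1 _) (mul_le_mul (hA3 _) hf (norm_nonneg _) hA3')
      (by positivity) hA1'
  have hexp : (fun x : ℝ×ℝ×ℝ => U3 x.1 *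
      fderiv ℝ Φ3 (t0, x.1 + t0 * U1 x.2.1, x.2.1, x.2.2) (1, U1 x.2.1, 0, 0))
      = fun x : ℝ×ℝ×ℝ => U3 x.1 *
          fderiv ℝ Φ3 (t0, x.1 + t0 * U1 x.2.1, x.2.1, x.2.2) ((1:ℝ),(0:ℝ),(0:ℝ),(0:ℝ))
        + U1 x.2.1 * (U3 x.1 *
          fderiv ℝ Φ3 (t0, x.1 + t0 * U1 x.2.1, x.2.1, x.2.2) ((0:ℝ),(1:ℝ),(0:ℝ),(0:ℝ))) := by
    funext x
    rw [clm_expand]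
    ring
  rw [hexp, integral_add iA iB]
  congr 1
  · exact c1.symm
  · calc (∫ x in Box, U1 x.2.1 * (U3 x.1 *
        fderiv ℝ Φ3 (t0, x.1 + t0 * U1 x.2.1, x.2.1, x.2.2) ((0:ℝ),(1:ℝ),(0:ℝ),(0:ℝ))))
        = ∫ x in Box, U1 x.2.1 * U3 x.1 *
            fderiv ℝ Φ3 (t0, x.1 + t0 * U1 x.2.1, x.2.1, x.2.2) ((0:ℝ),(1:ℝ),(0:ℝ),(0:ℝ)) := by
          refine integral_congr_ae (ae_of_all _ fun x => ?_)
          ring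
      _ = ∫ x in Box, U1 x.2.1 * U3 (x.1 - t0 * U1 x.2.1) *
            fderiv ℝ Φ3 (t0, x.1, x.2.1, x.2.2) ((0:ℝ),(1:ℝ),(0:ℝ),(0:ℝ)) := c2.symm
      _ = ∫ x in Box, U3 (x.1 - t0 * U1 x.2.1) * U1 x.2.1 *
            fderiv ℝ Φ3 (t0, x.1, x.2.1, x.2.2) ((0:ℝ),(1:ℝ),(0:ℝ),(0:ℝ)) := by
          refine integral_congr_ae (ae_of_all _ fun x => ?_)
          ring

theorem main_aux
    (hU1m : Measurable U1) (hU3m : Measurable U3)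
    (hA1 : ∀ s, ‖U1 s‖ ≤ A1) (hA3 : ∀ s, ‖U3 s‖ ≤ A3)
    (hU3per : Function.Periodic U3 1)
    (h1 : ContDiff ℝ (⊤ : ℕ∞) Φ1) (h3 : ContDiff ℝ (⊤ : ℕ∞) Φ3)
    (hp1x : ∀ t y x2 x3 : ℝ, Φ1 (t, y + 1, x2, x3) = Φ1 (t, y, x2, x3))
    (hp1z : ∀ t x1 x2 y : ℝ, Φ1 (t, x1, x2, y + 1) = Φ1 (t, x1, x2, y))
    (hp3x : ∀ t y x2 x3 : ℝ, Φ3 (t, y + 1, x2, x3) = Φ3 (t, y, x2, x3))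
    (hp3z : ∀ t x1 x2 y : ℝ, Φ3 (t, x1, x2, y + 1) = Φ3 (t, x1, x2, y))
    (Tm : ℝ) (hv1 : ∀ q : ℝ×ℝ×ℝ×ℝ, Tm ≤ q.1 → Φ1 q = 0)
    (hv3 : ∀ q : ℝ×ℝ×ℝ×ℝ, Tm ≤ q.1 → Φ3 q = 0) :
    (∫ t in Set.Ici (0:ℝ), ∫ x in Box,
        (U1 x.2.1 * fderiv ℝ Φ1 (t, x.1, x.2.1, x.2.2) (1,0,0,0)
          + U3 (x.1 - t * U1 x.2.1) * fderiv ℝ Φ3 (t, x.1, x.2.1, x.2.2) (1,0,0,0)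
          + U1 x.2.1 * U1 x.2.1 * fderiv ℝ Φ1 (t, x.1, x.2.1, x.2.2) (0,1,0,0)
          + U1 x.2.1 * U3 (x.1 - t * U1 x.2.1) * fderiv ℝ Φ1 (t, x.1, x.2.1, x.2.2) (0,0,0,1)
          + U3 (x.1 - t * U1 x.2.1) * U1 x.2.1 * fderiv ℝ Φ3 (t, x.1, x.2.1, x.2.2) (0,1,0,0)
          + U3 (x.1 - t * U1 x.2.1) * U3 (x.1 - t * U1 x.2.1) *
              fderiv ℝ Φ3 (t, x.1, x.2.1, x.2.2) (0,0,0,1)))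
      + (∫ x in Box, (U1 x.2.1 * Φ1 (0, x.1, x.2.1, x.2.2)
          + U3 x.1 * Φ3 (0, x.1, x.2.1, x.2.2))) = 0 := by
  have hA1' : 0 ≤ A1 := (norm_nonneg _).trans (hA1 0)
  have hA3' : 0 ≤ A3 := (norm_nonneg _).trans (hA3 0)
  set T : ℝ := max Tm 0 + 1 with hT
  have hT0 : (0:ℝ) ≤ T := by
    have : (0:ℝ) ≤ max Tm 0 := le_max_right _ _
    rw [hT]; linarith
  have hTmT : Tm < T := by
    have : Tm ≤ max Tm 0 := le_max_left _ _
    rw [hT]; linarith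
  set g : ℝ → ℝ := fun t => ∫ x in Box,
        (U1 x.2.1 * fderiv ℝ Φ1 (t, x.1, x.2.1, x.2.2) (1,0,0,0)
          + U3 (x.1 - t * U1 x.2.1) * fderiv ℝ Φ3 (t, x.1, x.2.1, x.2.2) (1,0,0,0)
          + U1 x.2.1 * U1 x.2.1 * fderiv ℝ Φ1 (t, x.1, x.2.1, x.2.2) (0,1,0,0)
          + U1 x.2.1 * U3 (x.1 - t * U1 x.2.1) * fderiv ℝ Φ1 (t, x.1, x.2.1, x.2.2) (0,0,0,1)
          + U3 (x.1 - t * U1 x.2.1) * U1 x.2.1 * fderiv ℝ Φ3 (t, x.1, x.2.1, x.2.2) (0,1,0,0)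
          + U3 (x.1 - t * U1 x.2.1) * U3 (x.1 - t * U1 x.2.1) *
              fderiv ℝ Φ3 (t, x.1, x.2.1, x.2.2) (0,0,0,1)) with hg
  set H : ℝ → ℝ := fun t => ∫ x in Box,
      (U1 x.2.1 * Φ1 (t, x.1, x.2.1, x.2.2)
        + U3 (x.1 - t * U1 x.2.1) * Φ3 (t, x.1, x.2.1, x.2.2)) with hH
  have hHPQ : ∀ t : ℝ, H t
      = (∫ x in Box, U1 x.2.1 * Φ1 (t, x.1, x.2.1, x.2.2))
        + ∫ x in Box, U3 x.1 * Φ3 (t, x.1 + t * U1 x.2.1, x.2.1, x.2.2) := by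
    intro t
    obtain ⟨D1, hD1nn, hD1⟩ := exists_nonneg_bound (isCompact_K4 t t 0 1) h1.continuous
    obtain ⟨D3, hD3nn, hD3⟩ := exists_nonneg_bound (isCompact_K4 t t 0 1) h3.continuous
    have i1 : Integrable (fun x : ℝ×ℝ×ℝ => U1 x.2.1 * Φ1 (t, x.1, x.2.1, x.2.2))
        (volume.restrict Box) := by
      refine integrableOn_box ((mU1x hU1m).mul
        ((h1.continuous.comp (continuous_const.prodMk continuous_id)).measurable)).aestronglyMeasurable
        (C := A1 * D1) ?_
      rintro ⟨x1,x2,x3⟩ ⟨hx1,hx2,hx3⟩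
      rw [norm_mul]
      exact mul_le_mul (hA1 _) (hD1 _ (Set.mk_mem_prod (by simp)
        (Set.mk_mem_prod hx1 (Set.mk_mem_prod hx2 hx3)))) (norm_nonneg _) hA1'
    have i2 : Integrable (fun x : ℝ×ℝ×ℝ => U3 (x.1 - t * U1 x.2.1) * Φ3 (t, x.1, x.2.1, x.2.2))
        (volume.restrict Box) := by
      refine integrableOn_box ((mU3b hU1m hU3m t).mul
        ((h3.continuous.comp (continuous_const.prodMk continuous_id)).measurable)).aestronglyMeasurable
        (C := A3 * D3) ?_
      rintro ⟨x1,x2,x3⟩ ⟨hx1,hx2,hx3⟩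
      rw [norm_mul]
      exact mul_le_mul (hA3 _) (hD3 _ (Set.mk_mem_prod (by simp)
        (Set.mk_mem_prod hx1 (Set.mk_mem_prod hx2 hx3)))) (norm_nonneg _) hA3'
    simp only [hH]
    rw [integral_add i1 i2]
    congr 1
    have h := cov_lemma (w := fun _ => (1:ℝ)) hU1m hU3m hU3per hA1 hA3 measurable_const
      (W := 1) (fun s => by simp) t (Ψ := Φ3) h3.continuous hp3x
    simpa using h
  have hHd : ∀ t0 : ℝ, HasDerivAt H (g t0) t0 := by
    intro t0
    have hP := hasDerivAt_PP hU1m hA1 h1 t0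
    have hQ := hasDerivAt_QQ hU1m hU3m hA1 hA3 h3 t0
    have hfun : H = fun t => (∫ x in Box, U1 x.2.1 * Φ1 (t, x.1, x.2.1, x.2.2))
        + ∫ x in Box, U3 x.1 * Φ3 (t, x.1 + t * U1 x.2.1, x.2.1, x.2.2) := funext hHPQ
    rw [hfun]
    have i1 : Integrable (fun x : ℝ×ℝ×ℝ => U1 x.2.1 *
        fderiv ℝ Φ1 (t0, x.1, x.2.1, x.2.2) ((1:ℝ),(0:ℝ),(0:ℝ),(0:ℝ))) (volume.restrict Box) :=
      int_term (mU1x hU1m) (fun x _ => hA1 _) h1 t0 _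
    have i2 : Integrable (fun x : ℝ×ℝ×ℝ => U3 (x.1 - t0 * U1 x.2.1) *
        fderiv ℝ Φ3 (t0, x.1, x.2.1, x.2.2) ((1:ℝ),(0:ℝ),(0:ℝ),(0:ℝ))) (volume.restrict Box) :=
      int_term (mU3b hU1m hU3m t0) (fun x _ => hA3 _) h3 t0 _
    have i3 : Integrable (fun x : ℝ×ℝ×ℝ => U1 x.2.1 * U1 x.2.1 *
        fderiv ℝ Φ1 (t0, x.1, x.2.1, x.2.2) ((0:ℝ),(1:ℝ),(0:ℝ),(0:ℝ))) (volume.restrict Box) :=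
      int_term ((mU1x hU1m).mul (mU1x hU1m)) (Cc := A1 * A1) (fun x _ => by
        simp only [Pi.mul_apply]; rw [norm_mul]; exact mul_le_mul (hA1 _) (hA1 _) (norm_nonneg _) hA1') h1 t0 _
    have i4 : Integrable (fun x : ℝ×ℝ×ℝ => U1 x.2.1 * U3 (x.1 - t0 * U1 x.2.1) *
        fderiv ℝ Φ1 (t0, x.1, x.2.1, x.2.2) ((0:ℝ),(0:ℝ),(0:ℝ),(1:ℝ))) (volume.restrict Box) :=
      int_term ((mU1x hU1m).mul (mU3b hU1m hU3m t0)) (Cc := A1 * A3) (fun x _ => by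
        simp only [Pi.mul_apply]; rw [norm_mul]; exact mul_le_mul (hA1 _) (hA3 _) (norm_nonneg _) hA1') h1 t0 _
    have i5 : Integrable (fun x : ℝ×ℝ×ℝ => U3 (x.1 - t0 * U1 x.2.1) * U1 x.2.1 *
        fderiv ℝ Φ3 (t0, x.1, x.2.1, x.2.2) ((0:ℝ),(1:ℝ),(0:ℝ),(0:ℝ))) (volume.restrict Box) :=
      int_term ((mU3b hU1m hU3m t0).mul (mU1x hU1m)) (Cc := A3 * A1) (fun x _ => by
        simp only [Pi.mul_apply]; rw [norm_mul]; exact mul_le_mul (hA3 _) (hA1 _) (norm_nonneg _) hA3') h3 t0 _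
    have i6 : Integrable (fun x : ℝ×ℝ×ℝ => U3 (x.1 - t0 * U1 x.2.1) * U3 (x.1 - t0 * U1 x.2.1) *
        fderiv ℝ Φ3 (t0, x.1, x.2.1, x.2.2) ((0:ℝ),(0:ℝ),(0:ℝ),(1:ℝ))) (volume.restrict Box) :=
      int_term ((mU3b hU1m hU3m t0).mul (mU3b hU1m hU3m t0)) (Cc := A3 * A3) (fun x _ => by
        simp only [Pi.mul_apply]; rw [norm_mul]; exact mul_le_mul (hA3 _) (hA3 _) (norm_nonneg _) hA3') h3 t0 _
    have hval : g t0 = (∫ x in Box, U1 x.2.1 *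
          fderiv ℝ Φ1 (t0, x.1, x.2.1, x.2.2) (1,0,0,0))
        + ∫ x in Box, U3 x.1 *
            fderiv ℝ Φ3 (t0, x.1 + t0 * U1 x.2.1, x.2.1, x.2.2) (1, U1 x.2.1, 0, 0) := by
      simp only [hg]
      have e5 : (∫ x in Box, (U1 x.2.1 * fderiv ℝ Φ1 (t0, x.1, x.2.1, x.2.2) (1,0,0,0) + U3 (x.1 - t0 * U1 x.2.1) * fderiv ℝ Φ3 (t0, x.1, x.2.1, x.2.2) (1,0,0,0) + U1 x.2.1 * U1 x.2.1 * fderiv ℝ Φ1 (t0, x.1, x.2.1, x.2.2) (0,1,0,0) + U1 x.2.1 * U3 (x.1 - t0 * U1 x.2.1) * fderiv ℝ Φ1 (t0, x.1, x.2.1, x.2.2) (0,0,0,1) + U3 (x.1 - t0 * U1 x.2.1) * U1 x.2.1 * fderiv ℝ Φ3 (t0, x.1, x.2.1, x.2.2) (0,1,0,0) + U3 (x.1 - t0 * U1 x.2.1) * U3 (x.1 - t0 * U1 x.2.1) * fderiv ℝ Φ3 (t0, x.1, x.2.1, x.2.2) (0,0,0,1)))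
          = (∫ x in Box, (U1 x.2.1 * fderiv ℝ Φ1 (t0, x.1, x.2.1, x.2.2) (1,0,0,0) + U3 (x.1 - t0 * U1 x.2.1) * fderiv ℝ Φ3 (t0, x.1, x.2.1, x.2.2) (1,0,0,0) + U1 x.2.1 * U1 x.2.1 * fderiv ℝ Φ1 (t0, x.1, x.2.1, x.2.2) (0,1,0,0) + U1 x.2.1 * U3 (x.1 - t0 * U1 x.2.1) * fderiv ℝ Φ1 (t0, x.1, x.2.1, x.2.2) (0,0,0,1) + U3 (x.1 - t0 * U1 x.2.1) * U1 x.2.1 * fderiv ℝ Φ3 (t0, x.1, x.2.1, x.2.2) (0,1,0,0))) + ∫ x in Box, U3 (x.1 - t0 * U1 x.2.1) * U3 (x.1 - t0 * U1 x.2.1) * fderiv ℝ Φ3 (t0, x.1, x.2.1, x.2.2) (0,0,0,1) :=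
        integral_add ((((i1.add i2).add i3).add i4).add i5) i6
      have e4 : (∫ x in Box, (U1 x.2.1 * fderiv ℝ Φ1 (t0, x.1, x.2.1, x.2.2) (1,0,0,0) + U3 (x.1 - t0 * U1 x.2.1) * fderiv ℝ Φ3 (t0, x.1, x.2.1, x.2.2) (1,0,0,0) + U1 x.2.1 * U1 x.2.1 * fderiv ℝ Φ1 (t0, x.1, x.2.1, x.2.2) (0,1,0,0) + U1 x.2.1 * U3 (x.1 - t0 * U1 x.2.1) * fderiv ℝ Φ1 (t0, x.1, x.2.1, x.2.2) (0,0,0,1) + U3 (x.1 - t0 * U1 x.2.1) * U1 x.2.1 * fderiv ℝ Φ3 (t0, x.1, x.2.1, x.2.2) (0,1,0,0)))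
          = (∫ x in Box, (U1 x.2.1 * fderiv ℝ Φ1 (t0, x.1, x.2.1, x.2.2) (1,0,0,0) + U3 (x.1 - t0 * U1 x.2.1) * fderiv ℝ Φ3 (t0, x.1, x.2.1, x.2.2) (1,0,0,0) + U1 x.2.1 * U1 x.2.1 * fderiv ℝ Φ1 (t0, x.1, x.2.1, x.2.2) (0,1,0,0) + U1 x.2.1 * U3 (x.1 - t0 * U1 x.2.1) * fderiv ℝ Φ1 (t0, x.1, x.2.1, x.2.2) (0,0,0,1))) + ∫ x in Box, U3 (x.1 - t0 * U1 x.2.1) * U1 x.2.1 * fderiv ℝ Φ3 (t0, x.1, x.2.1, x.2.2) (0,1,0,0) :=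
        integral_add (((i1.add i2).add i3).add i4) i5
      have e3 : (∫ x in Box, (U1 x.2.1 * fderiv ℝ Φ1 (t0, x.1, x.2.1, x.2.2) (1,0,0,0) + U3 (x.1 - t0 * U1 x.2.1) * fderiv ℝ Φ3 (t0, x.1, x.2.1, x.2.2) (1,0,0,0) + U1 x.2.1 * U1 x.2.1 * fderiv ℝ Φ1 (t0, x.1, x.2.1, x.2.2) (0,1,0,0) + U1 x.2.1 * U3 (x.1 - t0 * U1 x.2.1) * fderiv ℝ Φ1 (t0, x.1, x.2.1, x.2.2) (0,0,0,1)))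
          = (∫ x in Box, (U1 x.2.1 * fderiv ℝ Φ1 (t0, x.1, x.2.1, x.2.2) (1,0,0,0) + U3 (x.1 - t0 * U1 x.2.1) * fderiv ℝ Φ3 (t0, x.1, x.2.1, x.2.2) (1,0,0,0) + U1 x.2.1 * U1 x.2.1 * fderiv ℝ Φ1 (t0, x.1, x.2.1, x.2.2) (0,1,0,0))) + ∫ x in Box, U1 x.2.1 * U3 (x.1 - t0 * U1 x.2.1) * fderiv ℝ Φ1 (t0, x.1, x.2.1, x.2.2) (0,0,0,1) :=
        integral_add ((i1.add i2).add i3) i4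
      have e2 : (∫ x in Box, (U1 x.2.1 * fderiv ℝ Φ1 (t0, x.1, x.2.1, x.2.2) (1,0,0,0) + U3 (x.1 - t0 * U1 x.2.1) * fderiv ℝ Φ3 (t0, x.1, x.2.1, x.2.2) (1,0,0,0) + U1 x.2.1 * U1 x.2.1 * fderiv ℝ Φ1 (t0, x.1, x.2.1, x.2.2) (0,1,0,0)))
          = (∫ x in Box, (U1 x.2.1 * fderiv ℝ Φ1 (t0, x.1, x.2.1, x.2.2) (1,0,0,0) + U3 (x.1 - t0 * U1 x.2.1) * fderiv ℝ Φ3 (t0, x.1, x.2.1, x.2.2) (1,0,0,0))) + ∫ x in Box, U1 x.2.1 * U1 x.2.1 * fderiv ℝ Φ1 (t0, x.1, x.2.1, x.2.2) (0,1,0,0) :=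
        integral_add (i1.add i2) i3
      have e1 : (∫ x in Box, (U1 x.2.1 * fderiv ℝ Φ1 (t0, x.1, x.2.1, x.2.2) (1,0,0,0) + U3 (x.1 - t0 * U1 x.2.1) * fderiv ℝ Φ3 (t0, x.1, x.2.1, x.2.2) (1,0,0,0)))
          = (∫ x in Box, U1 x.2.1 * fderiv ℝ Φ1 (t0, x.1, x.2.1, x.2.2) (1,0,0,0)) + ∫ x in Box, U3 (x.1 - t0 * U1 x.2.1) * fderiv ℝ Φ3 (t0, x.1, x.2.1, x.2.2) (1,0,0,0) :=
        integral_add i1 i2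
      rw [e5, e4, e3, e2, e1,
          Z11 hU1m hA1 h1 hp1x t0,
          Z13 hU1m hU3m hA1 hA3 h1 hp1z t0,
          Z33 hU1m hU3m hA1 hA3 h3 hp3z t0,
          Qval hU1m hU3m hA1 hA3 hU3per h3 hp3x t0]
      ring
    rw [hval]
    exact hP.add hQ
  have hgm : StronglyMeasurable g := by
    rw [hg]
    have pU1 : Measurable fun p : ℝ × (ℝ×ℝ×ℝ) => U1 p.2.2.1 :=
      hU1m.comp (measurable_fst.comp (measurable_snd.comp measurable_snd))
    have pb : Measurable fun p : ℝ × (ℝ×ℝ×ℝ) => U3 (p.2.1 - p.1 * U1 p.2.2.1) :=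
      hU3m.comp ((measurable_fst.comp measurable_snd).sub (measurable_fst.mul pU1))
    have pf1 : ∀ v : ℝ×ℝ×ℝ×ℝ, Measurable fun p : ℝ × (ℝ×ℝ×ℝ) =>
        fderiv ℝ Φ1 (p.1, p.2.1, p.2.2.1, p.2.2.2) v := fun v => (cont_fderiv_app h1 v).measurable
    have pf3 : ∀ v : ℝ×ℝ×ℝ×ℝ, Measurable fun p : ℝ × (ℝ×ℝ×ℝ) =>
        fderiv ℝ Φ3 (p.1, p.2.1, p.2.2.1, p.2.2.2) v := fun v => (cont_fderiv_app h3 v).measurable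
    have hj : StronglyMeasurable (fun p : ℝ × (ℝ×ℝ×ℝ) =>
        U1 p.2.2.1 * fderiv ℝ Φ1 (p.1, p.2.1, p.2.2.1, p.2.2.2) ((1:ℝ),(0:ℝ),(0:ℝ),(0:ℝ))
        + U3 (p.2.1 - p.1 * U1 p.2.2.1) * fderiv ℝ Φ3 (p.1, p.2.1, p.2.2.1, p.2.2.2) ((1:ℝ),(0:ℝ),(0:ℝ),(0:ℝ))
        + U1 p.2.2.1 * U1 p.2.2.1 * fderiv ℝ Φ1 (p.1, p.2.1, p.2.2.1, p.2.2.2) ((0:ℝ),(1:ℝ),(0:ℝ),(0:ℝ))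
        + U1 p.2.2.1 * U3 (p.2.1 - p.1 * U1 p.2.2.1) * fderiv ℝ Φ1 (p.1, p.2.1, p.2.2.1, p.2.2.2) ((0:ℝ),(0:ℝ),(0:ℝ),(1:ℝ))
        + U3 (p.2.1 - p.1 * U1 p.2.2.1) * U1 p.2.2.1 * fderiv ℝ Φ3 (p.1, p.2.1, p.2.2.1, p.2.2.2) ((0:ℝ),(1:ℝ),(0:ℝ),(0:ℝ))
        + U3 (p.2.1 - p.1 * U1 p.2.2.1) * U3 (p.2.1 - p.1 * U1 p.2.2.1) * fderiv ℝ Φ3 (p.1, p.2.1, p.2.2.1, p.2.2.2) ((0:ℝ),(0:ℝ),(0:ℝ),(1:ℝ))) :=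
      Measurable.stronglyMeasurable
        ((((((pU1.mul (pf1 _)).add (pb.mul (pf3 _))).add ((pU1.mul pU1).mul (pf1 _))).add
          ((pU1.mul pb).mul (pf1 _))).add ((pb.mul pU1).mul (pf3 _))).add
          ((pb.mul pb).mul (pf3 _)))
    exact hj.integral_prod_right'
  obtain ⟨C1, hC1nn, hC1⟩ := exists_nonneg_bound (isCompact_K4 0 T 0 1)
    (h1.continuous_fderiv (by simp))
  obtain ⟨C3, hC3nn, hC3⟩ := exists_nonneg_bound (isCompact_K4 0 T 0 1)
    (h3.continuous_fderiv (by simp))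
  have hgbd : ∀ t ∈ Set.Icc (0:ℝ) T, ‖g t‖
      ≤ (A1*C1 + A3*C3 + A1*A1*C1 + A1*A3*C1 + A3*A1*C3 + A3*A3*C3)
          * ((volume.restrict Box) Set.univ).toReal := by
    intro t ht
    simp only [hg]
    refine norm_integral_le_of_norm_le_const ?_
    refine (ae_restrict_mem measurableSet_box).mono ?_
    rintro ⟨x1, x2, x3⟩ ⟨hx1, hx2, hx3⟩
    have hmem : ((t, x1, x2, x3) : ℝ×ℝ×ℝ×ℝ) ∈ Set.Icc (0:ℝ) T ×ˢ Set.Icc (0:ℝ) 1 ×ˢ I01 ×ˢ I01 :=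
      Set.mk_mem_prod ht (Set.mk_mem_prod hx1 (Set.mk_mem_prod hx2 hx3))
    have hf1 : ∀ v : ℝ×ℝ×ℝ×ℝ, ‖v‖ = 1 → ‖fderiv ℝ Φ1 (t, x1, x2, x3) v‖ ≤ C1 := by
      intro v hv
      have := (fderiv ℝ Φ1 (t, x1, x2, x3)).le_opNorm v
      rw [hv, mul_one] at this
      exact this.trans (hC1 _ hmem)
    have hf3 : ∀ v : ℝ×ℝ×ℝ×ℝ, ‖v‖ = 1 → ‖fderiv ℝ Φ3 (t, x1, x2, x3) v‖ ≤ C3 := by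
      intro v hv
      have := (fderiv ℝ Φ3 (t, x1, x2, x3)).le_opNorm v
      rw [hv, mul_one] at this
      exact this.trans (hC3 _ hmem)
    refine (norm_add6 _ _ _ _ _ _).trans ?_
    have b1 : ‖U1 x2 * fderiv ℝ Φ1 (t, x1, x2, x3) ((1:ℝ),(0:ℝ),(0:ℝ),(0:ℝ))‖ ≤ A1 * C1 := by
      rw [norm_mul]
      exact mul_le_mul (hA1 _) (hf1 _ norm_e1) (norm_nonneg _) hA1'
    have b2 : ‖U3 (x1 - t * U1 x2) * fderiv ℝ Φ3 (t, x1, x2, x3) ((1:ℝ),(0:ℝ),(0:ℝ),(0:ℝ))‖ ≤ A3 * C3 := by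
      rw [norm_mul]
      exact mul_le_mul (hA3 _) (hf3 _ norm_e1) (norm_nonneg _) hA3'
    have b3 : ‖U1 x2 * U1 x2 * fderiv ℝ Φ1 (t, x1, x2, x3) ((0:ℝ),(1:ℝ),(0:ℝ),(0:ℝ))‖ ≤ A1 * A1 * C1 := by
      rw [norm_mul, norm_mul]
      exact mul_le_mul (mul_le_mul (hA1 _) (hA1 _) (norm_nonneg _) hA1') (hf1 _ norm_e2)
        (norm_nonneg _) (by positivity)
    have b4 : ‖U1 x2 * U3 (x1 - t * U1 x2) * fderiv ℝ Φ1 (t, x1, x2, x3) ((0:ℝ),(0:ℝ),(0:ℝ),(1:ℝ))‖ ≤ A1 * A3 * C1 := by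
      rw [norm_mul, norm_mul]
      exact mul_le_mul (mul_le_mul (hA1 _) (hA3 _) (norm_nonneg _) hA1') (hf1 _ norm_e4)
        (norm_nonneg _) (by positivity)
    have b5 : ‖U3 (x1 - t * U1 x2) * U1 x2 * fderiv ℝ Φ3 (t, x1, x2, x3) ((0:ℝ),(1:ℝ),(0:ℝ),(0:ℝ))‖ ≤ A3 * A1 * C3 := by
      rw [norm_mul, norm_mul]
      exact mul_le_mul (mul_le_mul (hA3 _) (hA1 _) (norm_nonneg _) hA3') (hf3 _ norm_e2)
        (norm_nonneg _) (by positivity)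
    have b6 : ‖U3 (x1 - t * U1 x2) * U3 (x1 - t * U1 x2) * fderiv ℝ Φ3 (t, x1, x2, x3) ((0:ℝ),(0:ℝ),(0:ℝ),(1:ℝ))‖ ≤ A3 * A3 * C3 := by
      rw [norm_mul, norm_mul]
      exact mul_le_mul (mul_le_mul (hA3 _) (hA3 _) (norm_nonneg _) hA3') (hf3 _ norm_e4)
        (norm_nonneg _) (by positivity)
    exact add_le_add (add_le_add (add_le_add (add_le_add (add_le_add b1 b2) b3) b4) b5) b6
  have hgIcc : IntegrableOn g (Set.Icc 0 T) volume := by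
    haveI : IsFiniteMeasure (volume.restrict (Set.Icc (0:ℝ) T)) :=
      ⟨by rw [Measure.restrict_apply_univ]; exact measure_Icc_lt_top⟩
    exact integrable_bdd hgm.aestronglyMeasurable.restrict
      ((ae_restrict_mem measurableSet_Icc).mono hgbd)
  have hgIoi0 : ∀ t ∈ Set.Ioi T, g t = 0 := by
    intro t ht
    have hTt : Tm < t := lt_trans hTmT ht
    simp only [hg]
    refine integral_eq_zero_of_ae (ae_of_all _ fun x => ?_)
    dsimp only
    rw [fderiv_vanish h1 hv1 (q := (t, x.1, x.2.1, x.2.2)) hTt,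
       fderiv_vanish h3 hv3 (q := (t, x.1, x.2.1, x.2.2)) hTt]
    simp
  have hIoi_int : IntegrableOn g (Set.Ioi T) volume :=
    (integrableOn_zero).congr_fun (fun t ht => (hgIoi0 t ht).symm) measurableSet_Ioi
  have hIoi_zero : ∫ t in Set.Ioi T, g t = 0 := by
    rw [setIntegral_congr_fun measurableSet_Ioi hgIoi0]
    simp
  have hIcc_val : ∫ t in Set.Icc (0:ℝ) T, g t = H T - H 0 := by
    rw [MeasureTheory.integral_Icc_eq_integral_Ioc, ← intervalIntegral.integral_of_le hT0]
    refine intervalIntegral.integral_eq_sub_of_hasDerivAt (fun t _ => hHd t) ?_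
    rw [intervalIntegrable_iff]
    refine hgIcc.mono_set ?_
    rw [Set.uIoc_of_le hT0]
    exact Set.Ioc_subset_Icc_self
  have hHT : H T = 0 := by
    simp only [hH]
    refine integral_eq_zero_of_ae (ae_of_all _ fun x => ?_)
    dsimp only
    rw [hv1 (T, x.1, x.2.1, x.2.2) (le_of_lt hTmT), hv3 (T, x.1, x.2.1, x.2.2) (le_of_lt hTmT)]
    simp
  have hinit : (∫ x in Box, (U1 x.2.1 * Φ1 (0, x.1, x.2.1, x.2.2)
      + U3 x.1 * Φ3 (0, x.1, x.2.1, x.2.2))) = H 0 := by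
    simp only [hH]
    refine integral_congr_ae (ae_of_all _ fun x => ?_)
    norm_num
  have hIci : Set.Ici (0:ℝ) = Set.Icc 0 T ∪ Set.Ioi T := (Set.Icc_union_Ioi_eq_Ici hT0).symm
  rw [hinit, hIci, setIntegral_union ((Set.Iic_disjoint_Ioi le_rfl).mono Set.Icc_subset_Iic_self le_rfl) measurableSet_Ioi hgIcc hIoi_int,
    hIoi_zero, hIcc_val, hHT]
  ring

end Main

end StepShearAux

open StepShearAux in
/-- The shear flow built from periodic step functions
`u1(s) = α1` if `s mod 1 < ξ2`, `β1` otherwise, and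
`u3(s) = α3` if `s mod 1 < ξ1`, `β3` otherwise, is a weak solution of the 3d
incompressible Euler equations on the torus `(ℝ/ℤ)³` (fundamental domain
`[0,1]³`): for every smooth test vector field `φ = (φ1, φ2, φ3)`, 1-periodic in
each spatial variable, compactly supported in time, and divergence free, one has
`∫∫ [u·∂_tφ + ⟨u ⊗ u, ∇φ⟩] dx dt + ∫ u(x,0)·φ(x,0) dx = 0`. -/
theorem step_shear_flow_weak_solution
    (α1 β1 α3 β3 ξ1 ξ2 : ℝ) (hξ1 : ξ1 ∈ Set.Ioo (0 : ℝ) 1) (hξ2 : ξ2 ∈ Set.Ioo (0 : ℝ) 1)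
    (U1 U3 : ℝ → ℝ)
    (hU1 : ∀ s : ℝ, U1 s = if Int.fract s < ξ2 then α1 else β1)
    (hU3 : ∀ s : ℝ, U3 s = if Int.fract s < ξ1 then α3 else β3)
    (φ1 φ2 φ3 : ℝ → ℝ → ℝ → ℝ → ℝ)  -- components φi t x1 x2 x3
    (hs1 : ContDiff ℝ (⊤ : ℕ∞) (fun q : ℝ × ℝ × ℝ × ℝ => φ1 q.1 q.2.1 q.2.2.1 q.2.2.2))
    (hs2 : ContDiff ℝ (⊤ : ℕ∞) (fun q : ℝ × ℝ × ℝ × ℝ => φ2 q.1 q.2.1 q.2.2.1 q.2.2.2))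
    (hs3 : ContDiff ℝ (⊤ : ℕ∞) (fun q : ℝ × ℝ × ℝ × ℝ => φ3 q.1 q.2.1 q.2.2.1 q.2.2.2))
    -- spatial periodicity of each component in each spatial variable
    (hper : ∀ t x1 x2 x3 : ℝ, ∀ φ ∈ [φ1, φ2, φ3],
      φ t (x1 + 1) x2 x3 = φ t x1 x2 x3 ∧ φ t x1 (x2 + 1) x3 = φ t x1 x2 x3 ∧
        φ t x1 x2 (x3 + 1) = φ t x1 x2 x3)
    -- compact support in time
    (hsupp : ∃ Tmax : ℝ, ∀ t x1 x2 x3 : ℝ, Tmax ≤ t →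
      φ1 t x1 x2 x3 = 0 ∧ φ2 t x1 x2 x3 = 0 ∧ φ3 t x1 x2 x3 = 0)
    -- divergence free
    (hdiv : ∀ t x1 x2 x3 : ℝ,
      deriv (fun s => φ1 t s x2 x3) x1 + deriv (fun s => φ2 t x1 s x3) x2 +
        deriv (fun s => φ3 t x1 x2 s) x3 = 0) :
    (∫ t in Set.Ici (0 : ℝ),
      ∫ x in (Set.Icc (0 : ℝ) 1) ×ˢ (Set.Icc (0 : ℝ) 1) ×ˢ (Set.Icc (0 : ℝ) 1),
        (U1 x.2.1 * deriv (fun τ => φ1 τ x.1 x.2.1 x.2.2) t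
          + U3 (x.1 - t * U1 x.2.1) * deriv (fun τ => φ3 τ x.1 x.2.1 x.2.2) t
          + U1 x.2.1 * U1 x.2.1 * deriv (fun s => φ1 t s x.2.1 x.2.2) x.1
          + U1 x.2.1 * U3 (x.1 - t * U1 x.2.1) * deriv (fun s => φ1 t x.1 x.2.1 s) x.2.2
          + U3 (x.1 - t * U1 x.2.1) * U1 x.2.1 * deriv (fun s => φ3 t s x.2.1 x.2.2) x.1
          + U3 (x.1 - t * U1 x.2.1) * U3 (x.1 - t * U1 x.2.1) *
              deriv (fun s => φ3 t x.1 x.2.1 s) x.2.2))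
    + (∫ x in (Set.Icc (0 : ℝ) 1) ×ˢ (Set.Icc (0 : ℝ) 1) ×ˢ (Set.Icc (0 : ℝ) 1),
        (U1 x.2.1 * φ1 0 x.1 x.2.1 x.2.2 + U3 x.1 * φ3 0 x.1 x.2.1 x.2.2)) = 0 := by
  obtain ⟨Tm, hTm⟩ := hsupp
  have hper1 : ∀ t x1 x2 x3 : ℝ, φ1 t (x1 + 1) x2 x3 = φ1 t x1 x2 x3 ∧
      φ1 t x1 (x2 + 1) x3 = φ1 t x1 x2 x3 ∧ φ1 t x1 x2 (x3 + 1) = φ1 t x1 x2 x3 :=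
    fun t x1 x2 x3 => hper t x1 x2 x3 φ1 (by simp)
  have hper3 : ∀ t x1 x2 x3 : ℝ, φ3 t (x1 + 1) x2 x3 = φ3 t x1 x2 x3 ∧
      φ3 t x1 (x2 + 1) x3 = φ3 t x1 x2 x3 ∧ φ3 t x1 x2 (x3 + 1) = φ3 t x1 x2 x3 :=
    fun t x1 x2 x3 => hper t x1 x2 x3 φ3 (by simp)
  have hU1m : Measurable U1 := by
    rw [funext hU1]
    exact Measurable.ite (measurableSet_lt measurable_fract measurable_const)
      measurable_const measurable_const
  have hU3m : Measurable U3 := by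
    rw [funext hU3]
    exact Measurable.ite (measurableSet_lt measurable_fract measurable_const)
      measurable_const measurable_const
  have hA1 : ∀ s, ‖U1 s‖ ≤ |α1| + |β1| := by
    intro s
    rw [hU1 s, Real.norm_eq_abs]
    have := abs_nonneg α1
    have := abs_nonneg β1
    split_ifs <;> linarith
  have hA3 : ∀ s, ‖U3 s‖ ≤ |α3| + |β3| := by
    intro s
    rw [hU3 s, Real.norm_eq_abs]
    have := abs_nonneg α3
    have := abs_nonneg β3
    split_ifs <;> linarith
  have hU3per : Function.Periodic U3 1 := by
    intro s
    rw [hU3, hU3]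
    norm_num [Int.fract_add_one]
  have hp1x : ∀ t y x2 x3 : ℝ, (fun q : ℝ × ℝ × ℝ × ℝ => φ1 q.1 q.2.1 q.2.2.1 q.2.2.2) (t, y + 1, x2, x3) = (fun q : ℝ × ℝ × ℝ × ℝ => φ1 q.1 q.2.1 q.2.2.1 q.2.2.2) (t, y, x2, x3) :=
    fun t y x2 x3 => (hper1 t y x2 x3).1
  have hp1z : ∀ t x1 x2 y : ℝ, (fun q : ℝ × ℝ × ℝ × ℝ => φ1 q.1 q.2.1 q.2.2.1 q.2.2.2) (t, x1, x2, y + 1) = (fun q : ℝ × ℝ × ℝ × ℝ => φ1 q.1 q.2.1 q.2.2.1 q.2.2.2) (t, x1, x2, y) :=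
    fun t x1 x2 y => (hper1 t x1 x2 y).2.2
  have hp3x : ∀ t y x2 x3 : ℝ, (fun q : ℝ × ℝ × ℝ × ℝ => φ3 q.1 q.2.1 q.2.2.1 q.2.2.2) (t, y + 1, x2, x3) = (fun q : ℝ × ℝ × ℝ × ℝ => φ3 q.1 q.2.1 q.2.2.1 q.2.2.2) (t, y, x2, x3) :=
    fun t y x2 x3 => (hper3 t y x2 x3).1
  have hp3z : ∀ t x1 x2 y : ℝ, (fun q : ℝ × ℝ × ℝ × ℝ => φ3 q.1 q.2.1 q.2.2.1 q.2.2.2) (t, x1, x2, y + 1) = (fun q : ℝ × ℝ × ℝ × ℝ => φ3 q.1 q.2.1 q.2.2.1 q.2.2.2) (t, x1, x2, y) :=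
    fun t x1 x2 y => (hper3 t x1 x2 y).2.2
  have hv1 : ∀ q : ℝ×ℝ×ℝ×ℝ, Tm ≤ q.1 → (fun q : ℝ × ℝ × ℝ × ℝ => φ1 q.1 q.2.1 q.2.2.1 q.2.2.2) q = 0 :=
    fun q hq => (hTm q.1 q.2.1 q.2.2.1 q.2.2.2 hq).1
  have hv3 : ∀ q : ℝ×ℝ×ℝ×ℝ, Tm ≤ q.1 → (fun q : ℝ × ℝ × ℝ × ℝ => φ3 q.1 q.2.1 q.2.2.1 q.2.2.2) q = 0 :=
    fun q hq => (hTm q.1 q.2.1 q.2.2.1 q.2.2.2 hq).2.2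
  have ed1t : ∀ (t x1 x2 x3 : ℝ), deriv (fun τ => φ1 τ x1 x2 x3) t
      = fderiv ℝ (fun q : ℝ × ℝ × ℝ × ℝ => φ1 q.1 q.2.1 q.2.2.1 q.2.2.2) (t, x1, x2, x3) (1,0,0,0) :=
    fun t x1 x2 x3 => (slice_t hs1 t x1 x2 x3).deriv
  have ed3t : ∀ (t x1 x2 x3 : ℝ), deriv (fun τ => φ3 τ x1 x2 x3) t
      = fderiv ℝ (fun q : ℝ × ℝ × ℝ × ℝ => φ3 q.1 q.2.1 q.2.2.1 q.2.2.2) (t, x1, x2, x3) (1,0,0,0) :=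
    fun t x1 x2 x3 => (slice_t hs3 t x1 x2 x3).deriv
  have ed11 : ∀ (t x1 x2 x3 : ℝ), deriv (fun s => φ1 t s x2 x3) x1
      = fderiv ℝ (fun q : ℝ × ℝ × ℝ × ℝ => φ1 q.1 q.2.1 q.2.2.1 q.2.2.2) (t, x1, x2, x3) (0,1,0,0) :=
    fun t x1 x2 x3 => (slice_x1 hs1 t x1 x2 x3).deriv
  have ed31 : ∀ (t x1 x2 x3 : ℝ), deriv (fun s => φ3 t s x2 x3) x1
      = fderiv ℝ (fun q : ℝ × ℝ × ℝ × ℝ => φ3 q.1 q.2.1 q.2.2.1 q.2.2.2) (t, x1, x2, x3) (0,1,0,0) :=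
    fun t x1 x2 x3 => (slice_x1 hs3 t x1 x2 x3).deriv
  have ed13 : ∀ (t x1 x2 x3 : ℝ), deriv (fun s => φ1 t x1 x2 s) x3
      = fderiv ℝ (fun q : ℝ × ℝ × ℝ × ℝ => φ1 q.1 q.2.1 q.2.2.1 q.2.2.2) (t, x1, x2, x3) (0,0,0,1) :=
    fun t x1 x2 x3 => (slice_x3 hs1 t x1 x2 x3).deriv
  have ed33 : ∀ (t x1 x2 x3 : ℝ), deriv (fun s => φ3 t x1 x2 s) x3
      = fderiv ℝ (fun q : ℝ × ℝ × ℝ × ℝ => φ3 q.1 q.2.1 q.2.2.1 q.2.2.2) (t, x1, x2, x3) (0,0,0,1) :=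
    fun t x1 x2 x3 => (slice_x3 hs3 t x1 x2 x3).deriv
  simp only [ed1t, ed3t, ed11, ed31, ed13, ed33]
  exact main_aux hU1m hU3m hA1 hA3 hU3per hs1 hs3 hp1x hp1z hp3x hp3z Tm hv1 hv3
end
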